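/- arXiv:1712.06744 — 9 statements merged into one kernel-verified Lean document; each statement's English description precedes it below -/
import Mathlib

section
/- Let (p_n) and (q_n) be weight sequences with p_0 > 0, q_0 > 0, p_n, q_n ≥ 0, and suppose both ∑ p_n = P and ∑ q_n = Q converge. Let (k_n) be the unique sequence determined by the convolution equations q_n = ∑_{ν=0}^n k_ν p_{n−ν}. If ∑ |k_n| < ∞, then every sequence that is (N,p)-convergent to σ is also (N,q)-convergent to σ. -/
/-! Since `∑ p_{m-n} (s_n - σ) = P_m (t_m - σ)` with `P_m → P > 0`, (N,p)-convergence of `s` to `σ`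
says exactly that the Nörlund sums of `s - σ` tend to `0`. As `q(x) = k(x) p(x)`, the `q`-sums of
`s - σ` are the convolution of `k` with the `p`-sums of `s - σ`, and an `ℓ¹` sequence convolved
with a null sequence is null (Tannery's theorem). -/

open Filter Finset

/-- `s` is (N,p)-convergent to `σ`. -/
def NorlundConv (p s : ℕ → ℝ) (σ : ℝ) : Prop :=
  Tendsto (fun m => (∑ n ∈ Finset.range (m + 1), p (m - n) * s n) /
    (∑ k ∈ Finset.range (m + 1), p k)) atTop (nhds σ)

open PowerSeries Topology

section Convolution

variable {R : Type*}

theorem sum_range_mul_sub_eq_coeff_mul [Semiring R] (a b : ℕ → R) (m : ℕ) :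
    ∑ j ∈ range (m + 1), a j * b (m - j) = coeff m (mk a * mk b) := by
  simp only [coeff_mul, coeff_mk, Nat.sum_antidiagonal_eq_sum_range_succ (fun i j => a i * b j)]

theorem sum_range_sub_mul_eq_coeff_mul [CommSemiring R] (a b : ℕ → R) (m : ℕ) :
    ∑ n ∈ range (m + 1), a (m - n) * b n = coeff m (mk b * mk a) := by
  simp only [← sum_range_mul_sub_eq_coeff_mul, mul_comm (a _)]

theorem sum_range_sub_mul_of_mk_eq_mul [CommSemiring R] {p q k : ℕ → R}
    (hqkp : mk q = mk k * mk p) (v : ℕ → R) (m : ℕ) :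
    ∑ n ∈ range (m + 1), q (m - n) * v n =
      ∑ j ∈ range (m + 1), k j * ∑ n ∈ range (m - j + 1), p (m - j - n) * v n := by
  have hpv : mk (fun i => ∑ n ∈ range (i + 1), p (i - n) * v n) = mk v * mk p := by
    ext i
    rw [coeff_mk, sum_range_sub_mul_eq_coeff_mul]
  rw [sum_range_sub_mul_eq_coeff_mul, hqkp, mul_left_comm, ← hpv]
  exact (sum_range_mul_sub_eq_coeff_mul k _ m).symm

theorem tendsto_sum_range_mul_sub_zero [NormedRing R] [CompleteSpace R] {k u : ℕ → R}
    (hk : Summable (‖k ·‖)) (hu : Tendsto u atTop (𝓝 0)) :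
    Tendsto (fun m => ∑ j ∈ range (m + 1), k j * u (m - j)) atTop (𝓝 0) := by
  obtain ⟨C, hC⟩ := hu.norm.bddAbove_range
  let f : ℕ → ℕ → R := fun m j => if j ≤ m then k j * u (m - j) else 0
  have hf : ∀ m, ∑' j, f m j = ∑ j ∈ range (m + 1), k j * u (m - j) := fun m => by
    rw [tsum_eq_sum (s := range (m + 1)) fun j hj => if_neg (by simpa [Nat.lt_succ_iff] using hj)]
    exact sum_congr rfl fun j hj => if_pos (Nat.lt_succ_iff.mp (mem_range.mp hj))
  have hf_lim : ∀ j, Tendsto (f · j) atTop (𝓝 0) := fun j => by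
    have hku := (hu.comp (tendsto_sub_atTop_nat j)).const_mul (k j)
    rw [mul_zero] at hku
    exact hku.congr' ((eventually_ge_atTop j).mono fun m hm => (if_pos hm).symm)
  have hf_le : ∀ m j, ‖f m j‖ ≤ ‖k j‖ * C := fun m j => by
    by_cases hj : j ≤ m
    · simp only [f, if_pos hj]
      exact (norm_mul_le _ _).trans
        (mul_le_mul_of_nonneg_left (hC (Set.mem_range_self _)) (norm_nonneg _))
    · simp only [f, if_neg hj, norm_zero]
      exact mul_nonneg (norm_nonneg _) ((norm_nonneg _).trans (hC (Set.mem_range_self 0)))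
  simpa only [hf, tsum_zero] using tendsto_tsum_of_dominated_convergence (hk.mul_right C) hf_lim
    (Eventually.of_forall hf_le)

end Convolution

theorem norlundConv_iff_tendsto_sum_sub_mul {p : ℕ → ℝ} (hp0 : 0 < p 0) (hpn : ∀ n, 0 ≤ p n)
    (hP : Summable p) (s : ℕ → ℝ) (σ : ℝ) :
    NorlundConv p s σ ↔
      Tendsto (fun m => ∑ n ∈ range (m + 1), p (m - n) * (s n - σ)) atTop (𝓝 0) := by
  set P := fun m => ∑ i ∈ range (m + 1), p i
  have hP_pos : ∀ m, 0 < P m := fun m =>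
    hp0.trans_le (single_le_sum (fun i _ => hpn i) (by simp))
  have hP_lim : Tendsto P atTop (𝓝 (∑' n, p n)) :=
    hP.hasSum.tendsto_sum_nat.comp (tendsto_add_atTop_nat 1)
  have hP_sum_pos : 0 < ∑' n, p n := hp0.trans_le (hP.le_tsum 0 fun i _ => hpn i)
  have hsum_eq : ∀ m, ∑ n ∈ range (m + 1), p (m - n) * (s n - σ) =
      P m * ((∑ n ∈ range (m + 1), p (m - n) * s n) / P m - σ) := fun m => by
    have hreflect : ∑ n ∈ range (m + 1), p (m - n) = P m := by
      simpa using sum_range_reflect p (m + 1)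
    rw [mul_sub, mul_div_cancel₀ _ (hP_pos m).ne', ← hreflect, sum_mul]
    simp only [mul_sub, sum_sub_distrib]
  simp only [hsum_eq, NorlundConv]
  rw [← tendsto_sub_nhds_zero_iff]
  constructor
  · intro h
    simpa using hP_lim.mul h
  · intro h
    have h' := h.div hP_lim hP_sum_pos.ne'
    rw [zero_div] at h'
    exact h'.congr fun m => mul_div_cancel_left₀ _ (hP_pos m).ne'

theorem norlund_inclusion_of_summable_comparison (p q k : ℕ → ℝ)
    (hp0 : 0 < p 0) (hq0 : 0 < q 0)
    (hpn : ∀ n, 0 ≤ p n) (hqn : ∀ n, 0 ≤ q n)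
    (hP : Summable p) (hQ : Summable q)
    (hk : ∀ n, q n = ∑ ν ∈ Finset.range (n + 1), k ν * p (n - ν))
    (hksum : Summable fun n => |k n|) :
    ∀ (s : ℕ → ℝ) (σ : ℝ), NorlundConv p s σ → NorlundConv q s σ := by
  intro s σ hps
  have hqkp : mk q = mk k * mk p := by
    ext n
    rw [coeff_mk, hk, sum_range_mul_sub_eq_coeff_mul]
  rw [norlundConv_iff_tendsto_sum_sub_mul hp0 hpn hP] at hps
  rw [norlundConv_iff_tendsto_sum_sub_mul hq0 hqn hQ]
  have hk_norm : Summable (‖k ·‖) := by simpa only [Real.norm_eq_abs] using hksum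
  simpa only [sum_range_sub_mul_of_mk_eq_mul hqkp] using tendsto_sum_range_mul_sub_zero hk_norm hps
end

section
/- Let (p_n), (q_n) be weight sequences with p_0, q_0 > 0, p_n, q_n ≥ 0, and ∑ p_n, ∑ q_n both convergent. Let (k_n) be defined by q_n = ∑_{ν=0}^n k_ν p_{n−ν}. If the Nörlund method (N,q) includes (N,p) (i.e., every (N,p)-convergent sequence is (N,q)-convergent to the same limit), then ∑ |k_n| < ∞. -/
open Filter Finset

/-!
Write `P_n = p_0 + ⋯ + p_n` and `Q_m = q_0 + ⋯ + q_m`. Since `q = k ⋆ p`, the `(N,q)`-means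
of `s` are obtained from its `(N,p)`-means `t` by the lower triangular matrix
`a_{mn} = k_{m-n} P_n / Q_m`, and since `p_0 ≠ 0` every null sequence `t` is the sequence of
`(N,p)`-means of some `s`. So the inclusion makes `a` map null sequences to bounded ones, and the
uniform boundedness principle on `C₀(ℕ, ℝ)` bounds its absolute row sums by some `C`. As
`P_n ≥ p_0` and `Q_m ≤ ∑ q`, this gives `p_0 ∑_{n ≤ m} |k_n| ≤ C ∑ q` for every `m`.
-/

open Topology PowerSeries
open scoped ZeroAtInfty

section CauchyConv

variable {R : Type*} [CommSemiring R]

def cauchyConv (f g : ℕ → R) (m : ℕ) : R :=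
  ∑ n ∈ range (m + 1), f (m - n) * g n

theorem cauchyConv_eq_coeff (f g : ℕ → R) (m : ℕ) :
    cauchyConv f g m = coeff m (mk f * mk g) := by
  rw [coeff_mul, ← Nat.sum_antidiagonal_swap]
  simp only [Prod.fst_swap, Prod.snd_swap]
  rw [Nat.sum_antidiagonal_eq_sum_range_succ (fun i j => coeff j (mk f) * coeff i (mk g))]
  simp only [coeff_mk, cauchyConv]

theorem mk_cauchyConv (f g : ℕ → R) : mk (cauchyConv f g) = mk f * mk g := by
  ext m
  rw [coeff_mk, cauchyConv_eq_coeff]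

theorem cauchyConv_comm (f g : ℕ → R) : cauchyConv f g = cauchyConv g f := by
  ext m
  rw [cauchyConv_eq_coeff, cauchyConv_eq_coeff, mul_comm]

theorem cauchyConv_assoc (f g h : ℕ → R) :
    cauchyConv (cauchyConv f g) h = cauchyConv f (cauchyConv g h) := by
  ext m
  rw [cauchyConv_eq_coeff, cauchyConv_eq_coeff, mk_cauchyConv, mk_cauchyConv, mul_assoc]

theorem exists_cauchyConv_eq {R : Type*} [CommRing R] {f : ℕ → R} (hf : IsUnit (f 0))
    (t : ℕ → R) : ∃ g, cauchyConv f g = t := by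
  have hunit : IsUnit (mk f) := isUnit_iff_constantCoeff.2 (by rwa [constantCoeff_mk])
  obtain ⟨φ, hφ⟩ := hunit.dvd (a := mk t)
  refine ⟨fun n => coeff n φ, funext fun m => ?_⟩
  have hmk : mk (fun n => coeff n φ) = φ := ext fun n => coeff_mk n _
  rw [cauchyConv_eq_coeff, hmk, ← hφ, coeff_mk]

end CauchyConv

namespace ZeroAtInftyContinuousMap

theorem tendsto_atTop_zero (t : C₀(ℕ, ℝ)) : Tendsto t atTop (𝓝 0) :=
  cocompact_eq_atTop (α := ℕ) ▸ zero_at_infty t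

def ofTendstoAtTop (t : ℕ → ℝ) (ht : Tendsto t atTop (𝓝 0)) : C₀(ℕ, ℝ) :=
  ⟨⟨t, continuous_of_discreteTopology⟩, cocompact_eq_atTop (α := ℕ) ▸ ht⟩

@[simp]
theorem coe_ofTendstoAtTop (t : ℕ → ℝ) (ht : Tendsto t atTop (𝓝 0)) :
    ⇑(ofTendstoAtTop t ht) = t := rfl

theorem abs_apply_le_norm (t : C₀(ℕ, ℝ)) (n : ℕ) : |t n| ≤ ‖t‖ :=
  t.toBCF.norm_coe_le_norm n

noncomputable def finsetSumCLM (s : Finset ℕ) (c : ℕ → ℝ) : C₀(ℕ, ℝ) →L[ℝ] ℝ :=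
  LinearMap.mkContinuous
    { toFun := fun t => ∑ n ∈ s, c n * t n
      map_add' := fun t u => by simp only [coe_add, Pi.add_apply, mul_add, sum_add_distrib]
      map_smul' := fun r t => by
        simp only [coe_smul, Pi.smul_apply, smul_eq_mul, RingHom.id_apply, mul_sum,
          mul_left_comm] }
    (∑ n ∈ s, |c n|) fun t => by
      calc ‖∑ n ∈ s, c n * t n‖ ≤ ∑ n ∈ s, |c n| * ‖t‖ :=
            (norm_sum_le _ _).trans <| sum_le_sum fun n _ => by
              rw [norm_mul, Real.norm_eq_abs, Real.norm_eq_abs]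
              exact mul_le_mul_of_nonneg_left (abs_apply_le_norm t n) (abs_nonneg _)
        _ = (∑ n ∈ s, |c n|) * ‖t‖ := (sum_mul ..).symm

@[simp]
theorem finsetSumCLM_apply (s : Finset ℕ) (c : ℕ → ℝ) (t : C₀(ℕ, ℝ)) :
    finsetSumCLM s c t = ∑ n ∈ s, c n * t n := rfl

theorem sum_abs_le_norm_finsetSumCLM (s : Finset ℕ) (c : ℕ → ℝ) :
    ∑ n ∈ s, |c n| ≤ ‖finsetSumCLM s c‖ := by
  classical
  set σ : ℕ → ℝ := fun n => if n ∈ s then (SignType.sign (c n) : ℝ) else 0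
  have hσ : Tendsto σ atTop (𝓝 0) := by
    refine tendsto_const_nhds.congr' ?_
    filter_upwards [eventually_gt_atTop (s.sup id)] with n hn
    have : n ∉ s := fun h => (le_sup (f := id) h).not_gt hn
    simp [σ, this]
  set u := ofTendstoAtTop σ hσ
  have hu : ‖u‖ ≤ 1 := by
    rw [← norm_toBCF_eq_norm, BoundedContinuousFunction.norm_le zero_le_one]
    intro n
    simp only [toBCF_apply, Real.norm_eq_abs, u, coe_ofTendstoAtTop, σ]
    split_ifs
    · rcases SignType.sign (c n) with _ | _ | _ <;> simp
    · simp
  calc ∑ n ∈ s, |c n| = finsetSumCLM s c u := by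
        simp [u, σ, self_mul_sign]
    _ ≤ ‖finsetSumCLM s c‖ * ‖u‖ := le_of_abs_le ((finsetSumCLM s c).le_opNorm u)
    _ ≤ ‖finsetSumCLM s c‖ := mul_le_of_le_one_right (norm_nonneg (finsetSumCLM s c)) hu

end ZeroAtInftyContinuousMap

theorem bddAbove_sum_abs_of_forall_tendsto_zero {ι : Type*} (s : ι → Finset ℕ)
    (a : ι → ℕ → ℝ)
    (h : ∀ t : ℕ → ℝ, Tendsto t atTop (𝓝 0) →
      BddAbove (Set.range fun i => |∑ n ∈ s i, a i n * t n|)) :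
    BddAbove (Set.range fun i => ∑ n ∈ s i, |a i n|) := by
  obtain ⟨C, hC⟩ := banach_steinhaus
    (g := fun i => ZeroAtInftyContinuousMap.finsetSumCLM (s i) (a i)) fun t => by
      obtain ⟨C, hC⟩ := h t t.tendsto_atTop_zero
      exact ⟨C, fun i => hC ⟨i, rfl⟩⟩
  exact ⟨C, Set.forall_mem_range.2 fun i =>
    (ZeroAtInftyContinuousMap.sum_abs_le_norm_finsetSumCLM _ _).trans (hC i)⟩

theorem summable_abs_of_sum_range_abs_mul_le {k P : ℕ → ℝ} {a C : ℝ} (ha : 0 < a)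
    (hP : ∀ n, a ≤ P n) (h : ∀ m, ∑ n ∈ range (m + 1), |k (m - n)| * P n ≤ C) :
    Summable fun n => |k n| := by
  refine summable_of_sum_range_le (c := C / a) (fun n => abs_nonneg _) fun m => ?_
  rw [le_div_iff₀ ha]
  calc (∑ n ∈ range m, |k n|) * a ≤ (∑ n ∈ range (m + 1), |k n|) * a :=
        mul_le_mul_of_nonneg_right (sum_le_sum_of_subset_of_nonneg
          (range_subset_range.2 m.le_succ) fun i _ _ => abs_nonneg (k i)) ha.le
    _ = ∑ n ∈ range (m + 1), |k (m - n)| * a := by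
        rw [sum_mul, ← sum_range_reflect]
        simp
    _ ≤ ∑ n ∈ range (m + 1), |k (m - n)| * P n := by gcongr; exact hP _
    _ ≤ C := h m

theorem bddAbove_sum_abs_norlund_inclusion_matrix {p q k : ℕ → ℝ} (hp0 : p 0 ≠ 0)
    (hP : ∀ m, ∑ i ∈ range (m + 1), p i ≠ 0) (hqpk : q = cauchyConv p k)
    (hincl : ∀ s, NorlundConv p s 0 → NorlundConv q s 0) :
    BddAbove (Set.range fun m => ∑ n ∈ range (m + 1),
      |k (m - n) * (∑ i ∈ range (n + 1), p i) / ∑ i ∈ range (m + 1), q i|) := by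
  refine bddAbove_sum_abs_of_forall_tendsto_zero _ _ fun t ht => ?_
  obtain ⟨s, hs⟩ := exists_cauchyConv_eq (isUnit_iff_ne_zero.2 hp0)
    fun n => (∑ i ∈ range (n + 1), p i) * t n
  have hps : NorlundConv p s 0 := ht.congr fun m => by
    change _ = cauchyConv p s m / _
    rw [hs, mul_div_cancel_left₀ _ (hP m)]
  have hqs : Tendsto (fun m => cauchyConv q s m / ∑ i ∈ range (m + 1), q i) atTop (𝓝 0) :=
    hincl s hps
  have hmean : ∀ m, cauchyConv q s m / ∑ i ∈ range (m + 1), q i = ∑ n ∈ range (m + 1),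
      k (m - n) * (∑ i ∈ range (n + 1), p i) / (∑ i ∈ range (m + 1), q i) * t n := by
    intro m
    rw [hqpk, cauchyConv_comm p k, cauchyConv_assoc, hs, cauchyConv, sum_div]
    exact sum_congr rfl fun n _ => by ring
  simpa only [hmean] using hqs.abs.bddAbove_range

theorem summable_comparison_of_norlund_inclusion_general (p q k : ℕ → ℝ)
    (hp0 : 0 < p 0) (hq0 : 0 < q 0)
    (hpn : ∀ n, 0 ≤ p n) (hqn : ∀ n, 0 ≤ q n)
    (hQ : Summable q)
    (hk : ∀ n, q n = ∑ ν ∈ Finset.range (n + 1), k ν * p (n - ν))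
    (hincl : ∀ (s : ℕ → ℝ) (σ : ℝ), NorlundConv p s σ → NorlundConv q s σ) :
    Summable fun n => |k n| := by
  have hP : ∀ n, p 0 ≤ ∑ i ∈ range (n + 1), p i := fun n =>
    single_le_sum (fun i _ => hpn i) (mem_range.2 n.succ_pos)
  have hQ0 : ∀ m, 0 < ∑ i ∈ range (m + 1), q i := fun m =>
    hq0.trans_le (single_le_sum (fun i _ => hqn i) (mem_range.2 m.succ_pos))
  have hqpk : q = cauchyConv p k :=
    funext fun n => (hk n).trans (sum_congr rfl fun _ _ => mul_comm _ _)
  obtain ⟨C, hC⟩ := bddAbove_sum_abs_norlund_inclusion_matrix hp0.ne'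
    (fun m => (hp0.trans_le (hP m)).ne') hqpk fun s => hincl s 0
  have hC0 : 0 ≤ C := (sum_nonneg fun _ _ => abs_nonneg _).trans (hC ⟨0, rfl⟩)
  refine summable_abs_of_sum_range_abs_mul_le hp0 hP (C := C * ∑' n, q n) fun m => ?_
  have hrow := hC ⟨m, rfl⟩
  simp only [abs_div, abs_mul, abs_of_pos (hQ0 m), abs_of_pos (hp0.trans_le (hP _))] at hrow
  rw [← sum_div, div_le_iff₀ (hQ0 m)] at hrow
  exact hrow.trans (mul_le_mul_of_nonneg_left (hQ.sum_le_tsum _ fun i _ => hqn i) hC0)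

theorem summable_comparison_of_norlund_inclusion (p q k : ℕ → ℝ)
    (hp0 : 0 < p 0) (hq0 : 0 < q 0)
    (hpn : ∀ n, 0 ≤ p n) (hqn : ∀ n, 0 ≤ q n)
    (hP : Summable p) (hQ : Summable q)
    (hk : ∀ n, q n = ∑ ν ∈ Finset.range (n + 1), k ν * p (n - ν))
    (hincl : ∀ (s : ℕ → ℝ) (σ : ℝ), NorlundConv p s σ → NorlundConv q s σ) :
    Summable fun n => |k n| :=
  summable_comparison_of_norlund_inclusion_general p q k hp0 hq0 hpn hqn hQ hk hincl
end

section
/- Let (p_n), (q_n) be finite Nörlund weight sequences (p_0, q_0 > 0, nonnegative terms, convergent sums), with comparison sequences (k_n) and (l_n) defined by q = k * p and p = l * q (convolutions). Then (N,p) and (N,q) are equivalent (each includes the other) if and only if both ∑ |k_n| < ∞ and ∑ |l_n| < ∞. -/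
/-!
Write `P`, `Q` for the partial sums of `p`, `q`, and `t`, `u` for the `(N,p)`- and `(N,q)`-means
of `s`. Since `q = k ⋆ p`, associativity of the Cauchy product gives `Q u = k ⋆ (P t)` and
`Q = k ⋆ P`: the `(N,q)`-means are the transform of the `(N,p)`-means by the triangular matrix
`k (m - j) P j / Q m`, whose rows sum to `1`. Both `P` and `Q` stay between positive constants.
If `∑ |k n| < ∞`, dominated convergence shows that this transform maps null sequences to null
sequences, which gives the inclusion. Conversely, as `p 0 ≠ 0`, every sequence `t` is the
sequence of `(N,p)`-means of some `s`, so inclusion makes the transform map null sequences to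
null sequences; Banach–Steinhaus on `C₀(ℕ, ℝ)` then bounds its absolute row sums, hence the
partial sums of `|k n|`. The roles of `p, k` and `q, l` are symmetric.
-/

open Filter Finset

open PowerSeries Topology

def cauchyProd {R : Type*} [Mul R] [AddCommMonoid R] (a b : ℕ → R) (m : ℕ) : R :=
  ∑ n ∈ range (m + 1), a n * b (m - n)

section CauchyProduct

variable {R : Type*}

section Semiring

variable [Semiring R]

theorem PowerSeries.mk_injective : Function.Injective (mk : (ℕ → R) → R⟦X⟧) :=
  fun a b h => funext fun n => by simpa using congr_arg (coeff n) h

theorem mk_cauchyProd (a b : ℕ → R) : mk (cauchyProd a b) = mk a * mk b := by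
  ext m
  rw [coeff_mul, Nat.sum_antidiagonal_eq_sum_range_succ fun i j => coeff i (mk a) * coeff j (mk b)]
  simp [cauchyProd]

theorem cauchyProd_one_left (a : ℕ → R) (m : ℕ) :
    cauchyProd 1 a m = ∑ n ∈ range (m + 1), a n := by
  simpa [cauchyProd] using sum_range_reflect a (m + 1)

end Semiring

theorem cauchyProd_comm [CommSemiring R] (a b : ℕ → R) : cauchyProd a b = cauchyProd b a := by
  apply PowerSeries.mk_injective
  rw [mk_cauchyProd, mk_cauchyProd, mul_comm]

theorem cauchyProd_left_comm [CommSemiring R] (a b c : ℕ → R) :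
    cauchyProd a (cauchyProd b c) = cauchyProd b (cauchyProd a c) := by
  apply PowerSeries.mk_injective
  simp only [mk_cauchyProd, mul_left_comm]

theorem exists_cauchyProd_eq [Field R] {a : ℕ → R} (ha : a 0 ≠ 0) (b : ℕ → R) :
    ∃ s, cauchyProd a s = b := by
  refine ⟨fun n => coeff n ((mk a)⁻¹ * mk b), PowerSeries.mk_injective ?_⟩
  rw [mk_cauchyProd, show mk (fun n => coeff n ((mk a)⁻¹ * mk b)) = (mk a)⁻¹ * mk b from
    ext fun n => coeff_mk _ _, ← mul_assoc, PowerSeries.mul_inv_cancel _ ha, one_mul]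

end CauchyProduct

theorem tendsto_cauchyProd_of_summable_abs {a e : ℕ → ℝ} (ha : Summable fun n => |a n|)
    (he : Tendsto e atTop (𝓝 0)) : Tendsto (cauchyProd a e) atTop (𝓝 0) := by
  obtain ⟨M, hM⟩ := he.norm.bddAbove_range
  have hlim := tendsto_tsum_of_dominated_convergence (𝓕 := atTop) (g := fun _ => (0 : ℝ))
    (f := fun m n => if n ≤ m then a n * e (m - n) else 0) (ha.mul_right M)
    (fun n => by
      refine Tendsto.congr' (eventually_ge_atTop n |>.mono fun m hm => (if_pos hm).symm) ?_
      simpa using (he.comp (tendsto_sub_atTop_nat n)).const_mul (a n))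
    (Eventually.of_forall fun m n => by
      split_ifs
      · rw [norm_mul, Real.norm_eq_abs]
        exact mul_le_mul_of_nonneg_left (hM ⟨m - n, rfl⟩) (abs_nonneg _)
      · simpa using mul_nonneg (abs_nonneg (a n)) ((norm_nonneg _).trans (hM ⟨0, rfl⟩)))
  rw [tsum_zero] at hlim
  refine hlim.congr fun m => ?_
  rw [tsum_eq_sum (s := range (m + 1)) fun n hn => if_neg (by simpa [Nat.lt_succ_iff] using hn)]
  exact sum_congr rfl fun n hn => if_pos (Nat.lt_succ_iff.mp (mem_range.mp hn))

theorem tendsto_cauchyProd_one_left {a : ℕ → ℝ} (ha : Summable a) :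
    Tendsto (cauchyProd 1 a) atTop (𝓝 (∑' n, a n)) :=
  (ha.hasSum.tendsto_sum_nat.comp (tendsto_add_atTop_nat 1)).congr fun m =>
    (cauchyProd_one_left a m).symm

theorem le_cauchyProd_one_left {a : ℕ → ℝ} (ha : ∀ n, 0 ≤ a n) (m : ℕ) :
    a 0 ≤ cauchyProd 1 a m := by
  rw [cauchyProd_one_left]
  exact single_le_sum (fun n _ => ha n) (by simp)

theorem cauchyProd_one_left_le_tsum {a : ℕ → ℝ} (ha : ∀ n, 0 ≤ a n) (hs : Summable a)
    (m : ℕ) : cauchyProd 1 a m ≤ ∑' n, a n := by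
  rw [cauchyProd_one_left]
  exact hs.sum_le_tsum _ fun n _ => ha n

-- The row-sum condition of the Silverman–Toeplitz theorem.
open ZeroAtInfty ZeroAtInftyContinuousMap in
theorem exists_sum_abs_le_of_tendsto_zero {c : ℕ → ℕ → ℝ}
    (h : ∀ t : ℕ → ℝ, Tendsto t atTop (𝓝 0) →
      Tendsto (fun m => ∑ j ∈ range (m + 1), c m j * t j) atTop (𝓝 0)) :
    ∃ C, ∀ m, ∑ j ∈ range (m + 1), |c m j| ≤ C := by
  let φ (m : ℕ) : C₀(ℕ, ℝ) →L[ℝ] ℝ := LinearMap.mkContinuous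
    { toFun := fun t => ∑ j ∈ range (m + 1), c m j * t j
      map_add' := fun t u => by simp [mul_add, sum_add_distrib]
      map_smul' := fun r t => by simp [mul_sum, mul_left_comm] }
    (∑ j ∈ range (m + 1), |c m j|) fun t => by
      show ‖∑ j ∈ range (m + 1), c m j * t j‖ ≤ _
      rw [sum_mul]
      refine (norm_sum_le _ _).trans (sum_le_sum fun j _ => ?_)
      rw [norm_mul, Real.norm_eq_abs]
      exact mul_le_mul_of_nonneg_left (t.toBCF.norm_coe_le_norm j) (abs_nonneg _)
  obtain ⟨C, hC⟩ := banach_steinhaus (g := φ) fun t : C₀(ℕ, ℝ) => by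
    have ht : Tendsto t atTop (𝓝 0) := cocompact_eq_atTop (α := ℕ) ▸ zero_at_infty t
    obtain ⟨C, hC⟩ := (h t ht).norm.bddAbove_range
    exact ⟨C, fun m => hC ⟨m, rfl⟩⟩
  refine ⟨C, fun m => ?_⟩
  let sgn : ℕ → ℝ := fun j => if j ≤ m then SignType.sign (c m j) else 0
  let u : C₀(ℕ, ℝ) := ⟨⟨sgn, continuous_of_discreteTopology⟩,
    cocompact_eq_atTop (α := ℕ) ▸ tendsto_const_nhds.congr'
      ((eventually_gt_atTop m).mono fun j hj => (if_neg hj.not_ge).symm)⟩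
  have hu : ‖u‖ ≤ 1 := by
    rw [← norm_toBCF_eq_norm]
    refine (BoundedContinuousFunction.norm_le zero_le_one).mpr fun j => ?_
    show |sgn j| ≤ 1
    unfold sgn
    split_ifs
    · rcases lt_trichotomy (c m j) 0 with h | h | h <;> simp [h]
    · simp
  calc ∑ j ∈ range (m + 1), |c m j| = φ m u :=
        sum_congr rfl fun j hj => by simp [sgn, u, Nat.lt_succ_iff.mp (mem_range.mp hj)]
    _ ≤ ‖φ m u‖ := Real.le_norm_self _
    _ ≤ ‖φ m‖ * ‖u‖ := (φ m).le_opNorm u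
    _ ≤ C := by nlinarith [hC m, norm_nonneg (φ m), norm_nonneg u]

theorem norlundConv_iff {p s : ℕ → ℝ} {σ : ℝ} :
    NorlundConv p s σ ↔
      Tendsto (fun m => cauchyProd s p m / cauchyProd 1 p m) atTop (𝓝 σ) := by
  refine Iff.of_eq (congrArg (Tendsto · atTop (𝓝 σ)) (funext fun m => ?_))
  rw [cauchyProd_one_left]
  simp only [cauchyProd, mul_comm]

section Comparison

variable {p q k : ℕ → ℝ}

theorem NorlundConv.of_summable_abs (hp0 : 0 < p 0) (hq0 : 0 < q 0) (hpn : ∀ n, 0 ≤ p n)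
    (hqn : ∀ n, 0 ≤ q n) (hP : Summable p) (hQ : Summable q) (hk : q = cauchyProd k p)
    (hks : Summable fun n => |k n|) {s : ℕ → ℝ} {σ : ℝ} (h : NorlundConv p s σ) :
    NorlundConv q s σ := by
  rw [norlundConv_iff] at h ⊢
  set P := cauchyProd 1 p
  set A := cauchyProd s p
  have hP0 (m : ℕ) : P m ≠ 0 := (hp0.trans_le (le_cauchyProd_one_left hpn m)).ne'
  have hQ0 (m : ℕ) : cauchyProd 1 q m ≠ 0 := (hq0.trans_le (le_cauchyProd_one_left hqn m)).ne'
  have hQs : ∑' n, q n ≠ 0 := (hQ.tsum_pos hqn 0 hq0).ne'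
  have he : Tendsto (fun m => A m - σ * P m) atTop (𝓝 0) := by
    have hPlim : Tendsto P atTop (𝓝 (∑' n, p n)) := tendsto_cauchyProd_one_left hP
    have := hPlim.mul (h.sub_const σ)
    rw [sub_self, mul_zero] at this
    exact this.congr fun m => by field_simp [hP0 m]
  have hconv (m : ℕ) : cauchyProd k (fun j => A j - σ * P j) m
      = cauchyProd s q m - σ * cauchyProd 1 q m := by
    have hA : cauchyProd k A = cauchyProd s q := by rw [hk, cauchyProd_left_comm]
    have hB : cauchyProd k P = cauchyProd 1 q := by rw [hk, cauchyProd_left_comm]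
    rw [← hA, ← hB]
    simp only [cauchyProd, mul_sub, sum_sub_distrib, mul_sum, mul_left_comm]
  have := ((tendsto_cauchyProd_of_summable_abs hks he).div
    (tendsto_cauchyProd_one_left hQ) hQs).add_const σ
  rw [zero_div, zero_add] at this
  exact this.congr fun m => by rw [Pi.div_apply, hconv]; field_simp [hQ0 m]; ring

theorem tendsto_comparison_transform (hp0 : 0 < p 0) (hpn : ∀ n, 0 ≤ p n)
    (hk : q = cauchyProd k p) (himp : ∀ s σ, NorlundConv p s σ → NorlundConv q s σ)
    {t : ℕ → ℝ} (ht : Tendsto t atTop (𝓝 0)) :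
    Tendsto (fun m =>
        ∑ j ∈ range (m + 1), cauchyProd 1 p j * k (m - j) / cauchyProd 1 q m * t j)
      atTop (𝓝 0) := by
  set P := cauchyProd 1 p
  obtain ⟨s, hs⟩ := exists_cauchyProd_eq hp0.ne' fun j => P j * t j
  have hsp : cauchyProd s p = fun j => P j * t j := by rw [cauchyProd_comm, hs]
  have hp : NorlundConv p s 0 := by
    rw [norlundConv_iff, hsp]
    exact ht.congr fun m =>
      (mul_div_cancel_left₀ _ (hp0.trans_le (le_cauchyProd_one_left hpn m)).ne').symm
  have hsq : cauchyProd s q = cauchyProd (cauchyProd s p) k := by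
    rw [hk, cauchyProd_left_comm, cauchyProd_comm k]
  refine (norlundConv_iff.mp (himp s 0 hp)).congr fun m => ?_
  rw [hsq, hsp, cauchyProd, sum_div]
  exact sum_congr rfl fun j _ => by ring

theorem summable_abs_of_norlundConv_imp (hp0 : 0 < p 0) (hq0 : 0 < q 0) (hpn : ∀ n, 0 ≤ p n)
    (hqn : ∀ n, 0 ≤ q n) (hQ : Summable q) (hk : q = cauchyProd k p)
    (himp : ∀ s σ, NorlundConv p s σ → NorlundConv q s σ) : Summable fun n => |k n| := by
  set P := cauchyProd 1 p
  set Q := cauchyProd 1 q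
  set Qs := ∑' n, q n
  obtain ⟨C, hC⟩ := exists_sum_abs_le_of_tendsto_zero fun t ht =>
    tendsto_comparison_transform hp0 hpn hk himp ht
  have hPp (j : ℕ) : p 0 ≤ P j := le_cauchyProd_one_left hpn j
  have hQpos (m : ℕ) : 0 < Q m := hq0.trans_le (le_cauchyProd_one_left hqn m)
  have hQs : 0 < Qs := hQ.tsum_pos hqn 0 hq0
  have hterm (m j : ℕ) : |k (m - j)| ≤ Qs / p 0 * |P j * k (m - j) / Q m| := by
    rw [abs_div, abs_mul, abs_of_pos (hQpos m), abs_of_pos (hp0.trans_le (hPp j))]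
    calc |k (m - j)| = Qs / p 0 * (p 0 * |k (m - j)| / Qs) := by field_simp
      _ ≤ Qs / p 0 * (P j * |k (m - j)| / Q m) := by
        refine mul_le_mul_of_nonneg_left (div_le_div₀ ?_ ?_ (hQpos m)
          (cauchyProd_one_left_le_tsum hqn hQ m)) (by positivity)
        · exact mul_nonneg (hp0.le.trans (hPp j)) (abs_nonneg _)
        · exact mul_le_mul_of_nonneg_right (hPp j) (abs_nonneg _)
  have hbound (m : ℕ) : ∑ j ∈ range (m + 1), |k j| ≤ Qs / p 0 * C :=
    calc ∑ j ∈ range (m + 1), |k j| = ∑ j ∈ range (m + 1), |k (m - j)| := by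
          simpa using (sum_range_reflect (fun j => |k j|) (m + 1)).symm
      _ ≤ ∑ j ∈ range (m + 1), Qs / p 0 * |P j * k (m - j) / Q m| :=
          sum_le_sum fun j _ => hterm m j
      _ ≤ Qs / p 0 * C := by
          rw [← mul_sum]
          exact mul_le_mul_of_nonneg_left (hC m) (by positivity)
  refine summable_of_sum_range_le (c := Qs / p 0 * C) (fun n => abs_nonneg _) fun n => ?_
  exact (sum_le_sum_of_subset_of_nonneg (range_mono n.le_succ) fun _ _ _ => abs_nonneg _).trans
    (hbound n)

end Comparison

theorem norlund_equivalence_iff (p q k l : ℕ → ℝ)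
    (hp0 : 0 < p 0) (hq0 : 0 < q 0)
    (hpn : ∀ n, 0 ≤ p n) (hqn : ∀ n, 0 ≤ q n)
    (hP : Summable p) (hQ : Summable q)
    (hk : ∀ n, q n = ∑ ν ∈ Finset.range (n + 1), k ν * p (n - ν))
    (hl : ∀ n, p n = ∑ ν ∈ Finset.range (n + 1), l ν * q (n - ν)) :
    ((∀ (s : ℕ → ℝ) (σ : ℝ), NorlundConv p s σ ↔ NorlundConv q s σ)) ↔
      ((Summable fun n => |k n|) ∧ (Summable fun n => |l n|)) := by
  have hkp : q = cauchyProd k p := funext hk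
  have hlq : p = cauchyProd l q := funext hl
  constructor
  · intro h
    exact ⟨summable_abs_of_norlundConv_imp hp0 hq0 hpn hqn hQ hkp fun s σ => (h s σ).mp,
      summable_abs_of_norlundConv_imp hq0 hp0 hqn hpn hP hlq fun s σ => (h s σ).mpr⟩
  · rintro ⟨hks, hls⟩ s σ
    exact ⟨NorlundConv.of_summable_abs hp0 hq0 hpn hqn hP hQ hkp hks,
      NorlundConv.of_summable_abs hq0 hp0 hqn hpn hQ hP hlq hls⟩
end

section
/- If p_0 > 0, p_n ≥ 0, ∑ p_n = P < ∞, and the comparison sequence (k_n) defined by δ_{n,0} = ∑_{ν=0}^n k_ν p_{n−ν} (i.e., k is the convolution inverse of p) satisfies ∑ |k_n| < ∞, then the Nörlund method (N,p) is trivial: a sequence is (N,p)-convergent to σ if and only if it converges to σ in the ordinary sense. -/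
/-!
Write `e n = s n - σ` and `P m = p 0 + ⋯ + p m`. The Nörlund mean minus `σ` is `(p * e) m / P m`,
and `P m → ∑ p ≠ 0`, so `(N,p)`-convergence to `σ` means exactly `p * e → 0`. Convolution with an
absolutely summable sequence maps null sequences to null sequences (dominated convergence for
series). Applied to `p` this gives regularity; applied to `k`, with `e = k * (p * e)`, it gives the
converse.
-/

open Filter Finset

open PowerSeries Topology

def cauchyProduct {R : Type*} [Semiring R] (a b : ℕ → R) (n : ℕ) : R :=
  ∑ i ∈ range (n + 1), a i * b (n - i)

section Algebra

variable {R : Type*}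

theorem coeff_mk_mul_mk [Semiring R] (a b : ℕ → R) (n : ℕ) :
    coeff n (mk a * mk b) = cauchyProduct a b n := by
  rw [coeff_mul, Nat.sum_antidiagonal_eq_sum_range_succ_mk]
  simp only [coeff_mk, cauchyProduct]

theorem mk_cauchyProduct [Semiring R] (a b : ℕ → R) :
    mk (cauchyProduct a b) = mk a * mk b := by
  ext n
  rw [coeff_mk, coeff_mk_mul_mk]

theorem cauchyProduct_comm [CommSemiring R] (a b : ℕ → R) :
    cauchyProduct a b = cauchyProduct b a := by
  ext n
  rw [← coeff_mk_mul_mk, ← coeff_mk_mul_mk, mul_comm]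

theorem cauchyProduct_apply_eq_sum_sub_mul [CommSemiring R] (a b : ℕ → R) (n : ℕ) :
    cauchyProduct a b n = ∑ i ∈ range (n + 1), a (n - i) * b i := by
  rw [cauchyProduct_comm]
  exact sum_congr rfl fun i _ => mul_comm _ _

theorem cauchyProduct_const_right [Semiring R] (a : ℕ → R) (c : R) (n : ℕ) :
    cauchyProduct a (fun _ => c) n = (∑ i ∈ range (n + 1), a i) * c :=
  (sum_mul _ _ _).symm

theorem cauchyProduct_sub_right [Ring R] (a b c : ℕ → R) :
    cauchyProduct a (b - c) = cauchyProduct a b - cauchyProduct a c := by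
  ext n
  simp only [cauchyProduct, Pi.sub_apply, mul_sub, sum_sub_distrib]

theorem cauchyProduct_cancel_left [Semiring R] {k p : ℕ → R}
    (hkp : cauchyProduct k p = fun n => if n = 0 then 1 else 0) (b : ℕ → R) :
    cauchyProduct k (cauchyProduct p b) = b := by
  have hone : mk (cauchyProduct k p) = 1 := by
    ext n
    rw [coeff_mk, coeff_one, hkp]
  ext n
  rw [← coeff_mk_mul_mk, mk_cauchyProduct, ← mul_assoc, ← mk_cauchyProduct, hone, one_mul,
    coeff_mk]

end Algebra

theorem tendsto_cauchyProduct_zero {R : Type*} [NormedRing R] [CompleteSpace R] {a b : ℕ → R}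
    (ha : Summable (‖a ·‖)) (hb : Tendsto b atTop (𝓝 0)) :
    Tendsto (cauchyProduct a b) atTop (𝓝 0) := by
  obtain ⟨B, hB⟩ := hb.norm.bddAbove_range
  let f : ℕ → ℕ → R := fun n i => if i ≤ n then a i * b (n - i) else 0
  have hf : ∀ n, cauchyProduct a b n = ∑' i, f n i := by
    intro n
    rw [tsum_eq_sum (s := range (n + 1)) fun i hi => if_neg (by simpa [Nat.lt_succ_iff] using hi)]
    exact sum_congr rfl fun i hi => (if_pos (Nat.lt_succ_iff.mp (mem_range.mp hi))).symm
  have hlim : ∀ i, Tendsto (f · i) atTop (𝓝 0) := by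
    intro i
    have : Tendsto (fun n => a i * b (n - i)) atTop (𝓝 (a i * 0)) :=
      (hb.comp (tendsto_sub_atTop_nat i)).const_mul (a i)
    rw [mul_zero] at this
    refine this.congr' ?_
    filter_upwards [eventually_ge_atTop i] with n hn
    exact (if_pos hn).symm
  have hbound : ∀ n i, ‖f n i‖ ≤ ‖a i‖ * B := by
    intro n i
    by_cases hi : i ≤ n
    · simp only [f, if_pos hi]
      exact (norm_mul_le _ _).trans
        (mul_le_mul_of_nonneg_left (hB (Set.mem_range_self _)) (norm_nonneg _))
    · simp only [f, if_neg hi, norm_zero]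
      exact mul_nonneg (norm_nonneg _) ((norm_nonneg _).trans (hB (Set.mem_range_self 0)))
  simpa [funext hf] using
    tendsto_tsum_of_dominated_convergence (ha.mul_right B) hlim (Eventually.of_forall hbound)

theorem norlundConv_iff_tendsto_cauchyProduct_sub {p s : ℕ → ℝ} {σ L : ℝ}
    (hp : Tendsto (fun m => ∑ i ∈ range (m + 1), p i) atTop (𝓝 L)) (hL : L ≠ 0) :
    NorlundConv p s σ ↔ Tendsto (cauchyProduct p fun n => s n - σ) atTop (𝓝 0) := by
  have hsplit : ∀ m, ∑ n ∈ range (m + 1), p (m - n) * s n =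
      cauchyProduct p (fun n => s n - σ) m + (∑ i ∈ range (m + 1), p i) * σ := by
    intro m
    rw [← cauchyProduct_apply_eq_sum_sub_mul, ← cauchyProduct_const_right]
    change _ = cauchyProduct p (s - fun _ => σ) m + _
    rw [cauchyProduct_sub_right, Pi.sub_apply, sub_add_cancel]
  simp only [NorlundConv, hsplit]
  constructor
  · intro h
    have := hp.mul (h.sub_const σ)
    rw [sub_self, mul_zero] at this
    refine this.congr' ?_
    filter_upwards [hp.eventually_ne hL] with m hm
    field_simp
    ring
  · intro h
    have := (h.add (hp.mul_const σ)).div hp hL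
    rwa [zero_add, mul_div_cancel_left₀ σ hL] at this

theorem norlundConv_iff_tendsto_of_cauchyProduct_eq_delta {p k : ℕ → ℝ}
    (hp : Summable (‖p ·‖)) (hpsum : ∑' n, p n ≠ 0) (hk : Summable (‖k ·‖))
    (hkp : cauchyProduct k p = fun n => if n = 0 then 1 else 0) (s : ℕ → ℝ) (σ : ℝ) :
    NorlundConv p s σ ↔ Tendsto s atTop (𝓝 σ) := by
  have hP := (hp.of_norm.hasSum.tendsto_sum_nat).comp (tendsto_add_atTop_nat 1)
  rw [norlundConv_iff_tendsto_cauchyProduct_sub hP hpsum]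
  constructor
  · intro h
    have := tendsto_cauchyProduct_zero hk h
    rw [cauchyProduct_cancel_left hkp] at this
    exact tendsto_sub_nhds_zero_iff.mp this
  · exact fun h => tendsto_cauchyProduct_zero hp (tendsto_sub_nhds_zero_iff.mpr h)

theorem norlund_trivial_of_summable_inverse (p k : ℕ → ℝ)
    (hp0 : 0 < p 0) (hpn : ∀ n, 0 ≤ p n) (hP : Summable p)
    (hk : ∀ n, (if n = 0 then (1 : ℝ) else 0) =
      ∑ ν ∈ Finset.range (n + 1), k ν * p (n - ν))
    (hksum : Summable fun n => |k n|) :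
    ∀ (s : ℕ → ℝ) (σ : ℝ), NorlundConv p s σ ↔ Tendsto s atTop (nhds σ) :=
  norlundConv_iff_tendsto_of_cauchyProduct_eq_delta (hP.abs.congr fun _ => rfl)
    (hP.tsum_pos hpn 0 hp0).ne' hksum (funext fun n => (hk n).symm)
end

section
/- Let p_0 = 1, p_n > 0 for n > 0, suppose ∑ p_n x^n converges for |x| < 1, and suppose p_{n+1} p_{n−1} ≥ p_n^2 for all n ≥ 1 (log-convexity). Let (k_n) be the coefficients of the reciprocal power series 1/p(x) = ∑ k_n x^n. Then k_0 = 1, k_n ≤ 0 for all n > 0, and ∑_{n>0} k_n ≥ −1. (Kaluza–Szegő theorem.) -/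
open Filter Finset

/-!
Log-convexity says that the ratios `p (n + 1) / p n` increase. Comparing the recursions for `k (n + 2)`
and `k (n + 1)` then expresses `k (n + 2) * p 0 * p (n + 1)` as a sum of products `k ν * (…)` with
brackets of a fixed sign, so `k n ≤ 0` follows by strong induction. Convergence of `∑ p n x ^ n` on
`|x| < 1` forces all these ratios to be at most `1`, i.e. `p` is nonincreasing. Finally the recursion at
`N + 1` gives `0 ≤ -k (N + 1) * p 0 = ∑_{ν ≤ N} k ν p (N + 1 - ν) ≤ p (N + 1) ∑_{ν ≤ N} k ν`.
-/

section

variable {p k : ℕ → ℝ}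

theorem monotone_succ_div_of_sq_le (hpos : ∀ n, 0 < p n)
    (hlog : ∀ n ≥ 1, p n ^ 2 ≤ p (n + 1) * p (n - 1)) :
    Monotone fun n => p (n + 1) / p n := by
  refine monotone_nat_of_le_succ fun n => ?_
  rw [div_le_div_iff₀ (hpos n) (hpos (n + 1)), ← sq]
  simpa using hlog (n + 1) (by omega)

theorem succ_mul_le_succ_mul_of_sq_le (hpos : ∀ n, 0 < p n)
    (hlog : ∀ n ≥ 1, p n ^ 2 ≤ p (n + 1) * p (n - 1)) {a b : ℕ} (hab : a ≤ b) :
    p (a + 1) * p b ≤ p (b + 1) * p a :=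
  (div_le_div_iff₀ (hpos a) (hpos b)).1 (monotone_succ_div_of_sq_le hpos hlog hab)

/-- If `p m < p (m + 1)`, then with `x = p m / p (m + 1) < 1` the terms `p n * x ^ n`, `n ≥ m`, never
decrease, so they cannot tend to `0`. -/
theorem antitone_of_summable_of_sq_le (hpos : ∀ n, 0 < p n)
    (hlog : ∀ n ≥ 1, p n ^ 2 ≤ p (n + 1) * p (n - 1))
    (hconv : ∀ x : ℝ, |x| < 1 → Summable fun n => p n * x ^ n) : Antitone p := by
  refine antitone_nat_of_succ_le fun m => ?_
  by_contra! hm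
  set x := p m / p (m + 1) with hx
  have hx0 : 0 < x := div_pos (hpos m) (hpos (m + 1))
  have hx1 : x < 1 := (div_lt_one (hpos (m + 1))).2 hm
  have hgrow : ∀ j, p m * x ^ m ≤ p (m + j) * x ^ (m + j) := by
    intro j
    induction j with
    | zero => rfl
    | succ j ih =>
      have hstep : p (m + j) ≤ p (m + j + 1) * x := by
        rw [hx, mul_div, le_div_iff₀ (hpos (m + 1))]
        linarith [succ_mul_le_succ_mul_of_sq_le hpos hlog (Nat.le_add_right m j)]
      calc p m * x ^ m ≤ p (m + j) * x ^ (m + j) := ih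
        _ ≤ p (m + j + 1) * x * x ^ (m + j) := by gcongr
        _ = p (m + (j + 1)) * x ^ (m + (j + 1)) := by rw [← add_assoc, pow_succ]; ring
  have hlim := (hconv x (by rwa [abs_of_pos hx0])).tendsto_atTop_zero
  have hle : p m * x ^ m ≤ 0 :=
    ge_of_tendsto hlim (eventually_atTop.2 ⟨m, fun n hn => by
      simpa [Nat.add_sub_cancel' hn] using hgrow (n - m)⟩)
  exact hle.not_gt (mul_pos (hpos m) (pow_pos hx0 m))

theorem coeff_add_two_mul_eq_sum
    (hk : ∀ n, (∑ ν ∈ range (n + 1), k ν * p (n - ν)) = if n = 0 then 1 else 0) (n : ℕ) :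
    k (n + 2) * p 0 * p (n + 1) =
      ∑ ν ∈ range (n + 2), k ν * (p (n + 2) * p (n + 1 - ν) - p (n + 1) * p (n + 2 - ν)) := by
  have h₁ := hk (n + 1)
  have h₂ := hk (n + 2)
  rw [if_neg (by omega)] at h₁ h₂
  change ∑ ν ∈ range (n + 2), k ν * p (n + 1 - ν) = 0 at h₁
  rw [sum_range_succ, Nat.sub_self] at h₂
  have hsplit : ∑ ν ∈ range (n + 2), k ν * (p (n + 2) * p (n + 1 - ν) - p (n + 1) * p (n + 2 - ν)) =
      p (n + 2) * ∑ ν ∈ range (n + 2), k ν * p (n + 1 - ν) -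
        p (n + 1) * ∑ ν ∈ range (n + 2), k ν * p (n + 2 - ν) := by
    rw [mul_sum, mul_sum, ← sum_sub_distrib]
    exact sum_congr rfl fun ν _ => by ring
  rw [hsplit]
  linear_combination p (n + 1) * h₂ - p (n + 2) * h₁

theorem coeff_nonpos_of_sq_le (hpos : ∀ n, 0 < p n)
    (hlog : ∀ n ≥ 1, p n ^ 2 ≤ p (n + 1) * p (n - 1))
    (hk : ∀ n, (∑ ν ∈ range (n + 1), k ν * p (n - ν)) = if n = 0 then 1 else 0) :
    ∀ n > 0, k n ≤ 0 := by
  have hk0 : 0 < k 0 := by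
    have h := hk 0
    simp only [zero_add, sum_range_one, Nat.sub_self, if_true] at h
    exact pos_of_mul_pos_left (h ▸ one_pos) (hpos 0).le
  intro n
  induction n using Nat.strong_induction_on with
  | _ n ih =>
    intro hn
    match n, ih with
    | 1, _ =>
      have h := hk 1
      simp only [sum_range_succ, sum_range_zero, one_ne_zero, if_false] at h
      nlinarith [hpos 0, hpos 1]
    | m + 2, ih =>
      have hterm : ∀ ν ∈ range (m + 2),
          k ν * (p (m + 2) * p (m + 1 - ν) - p (m + 1) * p (m + 2 - ν)) ≤ 0 := by
        intro ν hν
        rw [mem_range] at hν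
        rcases Nat.eq_zero_or_pos ν with rfl | hν0
        · simp [mul_comm]
        have hcross := succ_mul_le_succ_mul_of_sq_le hpos hlog (Nat.sub_le (m + 1) ν)
        rw [show m + 1 - ν + 1 = m + 2 - ν by omega] at hcross
        exact mul_nonpos_of_nonpos_of_nonneg (ih ν hν hν0) (by linarith)
      have hprod : k (m + 2) * (p 0 * p (m + 1)) ≤ 0 := by
        rw [← mul_assoc, coeff_add_two_mul_eq_sum hk m]
        exact sum_nonpos hterm
      exact nonpos_of_mul_nonpos_left hprod (mul_pos (hpos 0) (hpos (m + 1)))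

theorem sum_range_coeff_nonneg (hpos : ∀ n, 0 < p n) (hanti : Antitone p)
    (hk : ∀ n, (∑ ν ∈ range (n + 1), k ν * p (n - ν)) = if n = 0 then 1 else 0)
    (hneg : ∀ n > 0, k n ≤ 0) (N : ℕ) : 0 ≤ ∑ ν ∈ range (N + 1), k ν := by
  have hrec := hk (N + 1)
  rw [if_neg (by omega), sum_range_succ, Nat.sub_self] at hrec
  have hlower : 0 ≤ ∑ ν ∈ range (N + 1), k ν * p (N + 1 - ν) := by
    nlinarith [hneg (N + 1) (by omega), hpos 0]
  have hupper : ∑ ν ∈ range (N + 1), k ν * p (N + 1 - ν) ≤ p (N + 1) * ∑ ν ∈ range (N + 1), k ν := by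
    rw [mul_sum]
    refine sum_le_sum fun ν _ => ?_
    rcases Nat.eq_zero_or_pos ν with rfl | hν
    · simp [mul_comm]
    · rw [mul_comm (p (N + 1))]
      exact mul_le_mul_of_nonpos_left (hanti (Nat.sub_le _ _)) (hneg ν hν)
  exact nonneg_of_mul_nonneg_right (hlower.trans hupper) (hpos (N + 1))

end

/-- Kaluza–Szegő theorem. -/
theorem kaluza_szego (p k : ℕ → ℝ)
    (hp0 : p 0 = 1) (hpn : ∀ n > 0, 0 < p n)
    (hconv : ∀ x : ℝ, |x| < 1 → Summable fun n => p n * x ^ n)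
    (hlog : ∀ n ≥ 1, p n ^ 2 ≤ p (n + 1) * p (n - 1))
    (hk : ∀ n, (∑ ν ∈ Finset.range (n + 1), k ν * p (n - ν)) =
      if n = 0 then 1 else 0) :
    k 0 = 1 ∧ (∀ n > 0, k n ≤ 0) ∧ ∀ N, -1 ≤ ∑ n ∈ Finset.Icc 1 N, k n := by
  have hpos : ∀ n, 0 < p n := fun n => by
    rcases Nat.eq_zero_or_pos n with rfl | hn
    · exact hp0 ▸ one_pos
    · exact hpn n hn
  have hk0 : k 0 = 1 := by simpa [hp0] using hk 0
  have hneg := coeff_nonpos_of_sq_le hpos hlog hk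
  refine ⟨hk0, hneg, fun N => ?_⟩
  have hsum := sum_range_coeff_nonneg hpos (antitone_of_summable_of_sq_le hpos hlog hconv) hk hneg N
  rw [range_eq_Ico, sum_eq_sum_Ico_succ_bot N.succ_pos, zero_add, Nat.succ_eq_add_one,
    Ico_add_one_right_eq_Icc, hk0] at hsum
  linarith
end

section
/- Let p_0 = 1, p_n > 0 for n > 0, with p_{n+1} p_{n−1} ≥ p_n^2 for all n ≥ 1, and suppose ∑ p_n = P < ∞. Then the Nörlund method (N,p) is trivial: (N,p)-convergence coincides with ordinary convergence. In particular, the convolution-inverse coefficients k_n of p satisfy ∑ |k_n| ≤ 2. -/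
/-!
By Kaluza's theorem the convolution inverse `k` of a log-convex sequence `p` with `p 0 = 1` has
`k 0 = 1` and `k n ≤ 0` for `n ≥ 1`: comparing the convolution identities at `n` and `n + 1`
term by term, the increase of the ratios `p (j + 1) / p j` fixes the sign of `k (n + 1)`.
Hence `|k n| ≤ p n`, so `k` is absolutely summable, and
`∑ |k n| = 2 - ∑ k n = 2 - 1 / ∑ p n ≤ 2`.
Once both `p` and `k` are absolutely summable the Nörlund means are equivalent to ordinary
limits: the numerator of the mean of `s` is `p ⋆ s`, and `s = k ⋆ (p ⋆ s)`, while convolving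
with an absolutely summable kernel maps convergent sequences to convergent sequences.
-/

open Filter Finset

open Topology

def IsConvInverse (k p : ℕ → ℝ) : Prop :=
  ∀ n, ∑ ν ∈ range (n + 1), k ν * p (n - ν) = if n = 0 then 1 else 0

theorem IsConvInverse.mk_mul_mk {k p : ℕ → ℝ} (hk : IsConvInverse k p) :
    PowerSeries.mk k * PowerSeries.mk p = 1 := by
  ext n
  rw [PowerSeries.coeff_mul, Finset.Nat.sum_antidiagonal_eq_sum_range_succ_mk]
  simpa only [PowerSeries.coeff_mk, PowerSeries.coeff_one] using hk n

theorem IsConvInverse.apply_zero {k p : ℕ → ℝ} (hk : IsConvInverse k p) (hp0 : p 0 = 1) :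
    k 0 = 1 := by
  simpa [hp0] using hk 0

theorem IsConvInverse.tsum_mul_tsum {k p : ℕ → ℝ} (hk : IsConvInverse k p)
    (hka : Summable fun n => |k n|) (hpa : Summable fun n => |p n|) :
    (∑' n, k n) * (∑' n, p n) = 1 := by
  simp_rw [← Real.norm_eq_abs] at hka hpa
  rw [tsum_mul_tsum_eq_tsum_sum_range_of_summable_norm hka hpa, tsum_congr hk, tsum_ite_eq]

theorem IsConvInverse.eq_sum_mul_sum {k p : ℕ → ℝ} (hk : IsConvInverse k p) (s : ℕ → ℝ)
    (n : ℕ) :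
    s n = ∑ ν ∈ range (n + 1), k (n - ν) * ∑ j ∈ range (ν + 1), p (ν - j) * s j := by
  have hS : PowerSeries.mk s = PowerSeries.mk s * PowerSeries.mk p * PowerSeries.mk k := by
    rw [mul_assoc, mul_comm (PowerSeries.mk p), hk.mk_mul_mk, mul_one]
  have hcoeff : ∀ (f g : PowerSeries ℝ) (m : ℕ), PowerSeries.coeff m (f * g) =
      ∑ j ∈ range (m + 1), PowerSeries.coeff j f * PowerSeries.coeff (m - j) g := by
    intro f g m
    rw [PowerSeries.coeff_mul, Finset.Nat.sum_antidiagonal_eq_sum_range_succ_mk]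
  conv_lhs => rw [← PowerSeries.coeff_mk n s, hS]
  simp only [hcoeff, PowerSeries.coeff_mk, mul_comm (k _), mul_comm (s _)]

theorem tendsto_sum_range_mul_sub {a t : ℕ → ℝ} {L : ℝ} (ha : Summable fun n => |a n|)
    (ht : Tendsto t atTop (𝓝 L)) :
    Tendsto (fun m => ∑ ν ∈ range (m + 1), a (m - ν) * t ν) atTop
      (𝓝 ((∑' n, a n) * L)) := by
  obtain ⟨C, hC⟩ : ∃ C, ∀ n, |t n| ≤ C := by
    obtain ⟨C, hC⟩ := ht.abs.bddAbove_range
    exact ⟨C, fun n => hC ⟨n, rfl⟩⟩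
  set f : ℕ → ℕ → ℝ := fun m ν => if ν ≤ m then a ν * t (m - ν) else 0
  have hf : ∀ m, ∑' ν, f m ν = ∑ ν ∈ range (m + 1), a (m - ν) * t ν := fun m => by
    rw [tsum_eq_sum (s := range (m + 1)) fun ν hν => if_neg (by simpa using hν),
      ← sum_range_reflect]
    refine sum_congr rfl fun ν hν => ?_
    have hνm : ν ≤ m := Nat.lt_succ_iff.mp (mem_range.mp hν)
    rw [Nat.add_sub_cancel, if_pos (Nat.sub_le m ν), Nat.sub_sub_self hνm]
  have hlim : ∀ ν, Tendsto (f · ν) atTop (𝓝 (a ν * L)) := fun ν =>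
    ((ht.comp (tendsto_sub_atTop_nat ν)).const_mul (a ν)).congr'
      (eventually_ge_atTop ν |>.mono fun m hm => (if_pos hm).symm)
  have hbound : ∀ m ν, ‖f m ν‖ ≤ |a ν| * C := fun m ν => by
    have hC0 : 0 ≤ C := (abs_nonneg _).trans (hC 0)
    by_cases hνm : ν ≤ m
    · simpa [f, hνm, abs_mul] using mul_le_mul_of_nonneg_left (hC _) (abs_nonneg (a ν))
    · simpa [f, hνm] using mul_nonneg (abs_nonneg (a ν)) hC0
  have := tendsto_tsum_of_dominated_convergence (ha.mul_right C) hlim (.of_forall hbound)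
  rw [tsum_mul_right] at this
  exact this.congr hf

/-- The finite Nörlund equivalence theorem. -/
theorem norlundConv_iff_tendsto {p k : ℕ → ℝ} (hk : IsConvInverse k p)
    (hpa : Summable fun n => |p n|) (hka : Summable fun n => |k n|) (s : ℕ → ℝ) (σ : ℝ) :
    NorlundConv p s σ ↔ Tendsto s atTop (𝓝 σ) := by
  have hKP := hk.tsum_mul_tsum hka hpa
  have hP0 : ∑' n, p n ≠ 0 := right_ne_zero_of_mul_eq_one hKP
  have hpartial : Tendsto (fun m => ∑ j ∈ range (m + 1), p j) atTop (𝓝 (∑' n, p n)) :=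
    hpa.of_abs.hasSum.tendsto_sum_nat.comp (tendsto_add_atTop_nat 1)
  constructor
  · intro hs
    have hnum : Tendsto (fun m => ∑ j ∈ range (m + 1), p (m - j) * s j) atTop
        (𝓝 (σ * ∑' n, p n)) :=
      (hs.mul hpartial).congr' <|
        (hpartial.eventually_ne hP0).mono fun m hm => div_mul_cancel₀ _ hm
    have := tendsto_sum_range_mul_sub hka hnum
    rwa [mul_left_comm, hKP, mul_one, ← funext (hk.eq_sum_mul_sum s)] at this
  · intro hs
    have := (tendsto_sum_range_mul_sub hpa hs).div hpartial hP0
    rwa [mul_div_cancel_left₀ _ hP0] at this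

theorem succ_mul_le_succ_mul_of_sq_le_mul {p : ℕ → ℝ} (hpos : ∀ n, 0 < p n)
    (hlog : ∀ n ≥ 1, p n ^ 2 ≤ p (n + 1) * p (n - 1)) {i j : ℕ} (hij : i ≤ j) :
    p (i + 1) * p j ≤ p (j + 1) * p i := by
  have hmono : Monotone fun n => p (n + 1) / p n := monotone_nat_of_le_succ fun n => by
    rw [div_le_div_iff₀ (hpos n) (hpos (n + 1)), ← sq]
    simpa using hlog (n + 1) le_add_self
  simpa only [div_le_div_iff₀ (hpos i) (hpos j)] using hmono hij

/-- Kaluza's theorem. -/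
theorem IsConvInverse.nonpos_succ {k p : ℕ → ℝ} (hk : IsConvInverse k p)
    (hpos : ∀ n, 0 < p n) (hlog : ∀ n ≥ 1, p n ^ 2 ≤ p (n + 1) * p (n - 1)) (n : ℕ) :
    k (n + 1) ≤ 0 := by
  induction n using Nat.strong_induction_on with
  | _ m ih =>
  set S := ∑ ν ∈ range (m + 1), k ν * p (m + 1 - ν)
  have hkS : k (m + 1) * p 0 = -S := by
    have := hk (m + 1)
    rw [sum_range_succ, if_neg m.succ_ne_zero, Nat.sub_self] at this
    linarith
  have hT : 0 ≤ ∑ ν ∈ range (m + 1), k ν * p (m - ν) := by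
    rw [hk m]
    split_ifs <;> norm_num
  have hTS : (∑ ν ∈ range (m + 1), k ν * p (m - ν)) * p (m + 1) ≤ S * p m := by
    simp_rw [S, sum_mul, mul_assoc]
    refine sum_le_sum fun ν hν => ?_
    rcases ν with _ | ν
    · rw [Nat.sub_zero, Nat.sub_zero, mul_comm (p m)]
    · refine mul_le_mul_of_nonpos_left ?_ (ih ν (by simpa using hν))
      have := succ_mul_le_succ_mul_of_sq_le_mul hpos hlog (Nat.sub_le m (ν + 1))
      rwa [show m - (ν + 1) + 1 = m + 1 - (ν + 1) by simp at hν; omega, mul_comm (p (m + 1))]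
        at this
  have hS : 0 ≤ S := nonneg_of_mul_nonneg_left ((mul_nonneg hT (hpos _).le).trans hTS) (hpos m)
  exact nonpos_of_mul_nonpos_left (hkS ▸ neg_nonpos.mpr hS) (hpos 0)

theorem IsConvInverse.abs_le {k p : ℕ → ℝ} (hk : IsConvInverse k p) (hp0 : p 0 = 1)
    (hp : ∀ n, 0 ≤ p n) (hneg : ∀ n, k (n + 1) ≤ 0) (n : ℕ) : |k n| ≤ p n := by
  have hk0 := hk.apply_zero hp0
  rcases n with _ | n
  · rw [hk0, hp0, abs_one]
  · have hrec := hk (n + 1)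
    rw [sum_range_succ, sum_range_succ', if_neg n.succ_ne_zero, Nat.sub_self, hp0,
      Nat.sub_zero, hk0] at hrec
    have hmid : ∑ i ∈ range n, k (i + 1) * p (n + 1 - (i + 1)) ≤ 0 :=
      sum_nonpos fun i _ => mul_nonpos_of_nonpos_of_nonneg (hneg i) (hp _)
    rw [abs_of_nonpos (hneg n)]
    linarith

theorem tsum_abs_eq_two_mul_sub_tsum {k : ℕ → ℝ} (hk : Summable k) (h0 : 0 ≤ k 0)
    (hneg : ∀ n, k (n + 1) ≤ 0) : ∑' n, |k n| = 2 * k 0 - ∑' n, k n := by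
  rw [hk.abs.tsum_eq_zero_add, hk.tsum_eq_zero_add, abs_of_nonneg h0,
    tsum_congr fun n => abs_of_nonpos (hneg n), tsum_neg]
  ring

theorem logconvex_finite_norlund_trivial (p k : ℕ → ℝ)
    (hp0 : p 0 = 1) (hpn : ∀ n > 0, 0 < p n)
    (hlog : ∀ n ≥ 1, p n ^ 2 ≤ p (n + 1) * p (n - 1))
    (hP : Summable p)
    (hk : ∀ n, (∑ ν ∈ Finset.range (n + 1), k ν * p (n - ν)) =
      if n = 0 then 1 else 0) :
    (Summable fun n => |k n|) ∧ (∑' n, |k n|) ≤ 2 ∧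
    ∀ (s : ℕ → ℝ) (σ : ℝ), NorlundConv p s σ ↔ Tendsto s atTop (nhds σ) := by
  have hk : IsConvInverse k p := hk
  have hpos : ∀ n, 0 < p n
    | 0 => hp0 ▸ one_pos
    | n + 1 => hpn _ n.succ_pos
  have hneg := hk.nonpos_succ hpos hlog
  have hka : Summable fun n => |k n| :=
    .of_nonneg_of_le (fun _ => abs_nonneg _) (hk.abs_le hp0 (hpos · |>.le) hneg) hP
  have hpa : Summable fun n => |p n| := hP.congr fun n => (abs_of_pos (hpos n)).symm
  have hK : 0 ≤ ∑' n, k n := nonneg_of_mul_nonneg_left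
    (hk.tsum_mul_tsum hka hpa ▸ zero_le_one) (hP.tsum_pos (hpos · |>.le) 0 (hpos 0))
  have hk0 := hk.apply_zero hp0
  refine ⟨hka, ?_, norlundConv_iff_tendsto hk hpa hka⟩
  rw [tsum_abs_eq_two_mul_sub_tsum hka.of_abs (hk0 ▸ zero_le_one) hneg, hk0]
  linarith
end

section
/- For s > 1, the Nörlund method with weights p_n = (n+1)^{−s} is trivial: a sequence converges in the ordinary sense if and only if its Nörlund means with these weights converge, to the same limit. -/
/-!
Let `P = ∑ pₙ Xⁿ` and `Q = P⁻¹ = ∑ qₙ Xⁿ`. The Nörlund numerators `Aₘ = ∑ p_{m-n} aₙ` are the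
coefficients of `P · ∑ aₙ Xⁿ`, so `aₙ = ∑ q_k A_{n-k}`. Convolution with an absolutely summable
kernel preserves convergence (Tannery's theorem), so `a → σ` gives `A → σ P(1)`, and conversely
`A → σ P(1)` makes `a` converge, necessarily to `σ` by the first direction.

Summability of `q` is Kaluza's theorem: for log-convex `p` with `p₀ = 1`, the recurrence
`∑_{k=1}^{n} (-q_k) p_{n-k} = pₙ` together with log-convexity shows inductively that `qₙ ≤ 0`
for `n ≥ 1`, and then the same recurrence gives `|qₙ| ≤ pₙ`.
-/

open Filter Finset PowerSeries
open scoped Topology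

theorem tendsto_sum_range_mul_sub_of_summable {c t : ℕ → ℝ} {L : ℝ} (hc : Summable c)
    (ht : Tendsto t atTop (𝓝 L)) :
    Tendsto (fun m => ∑ k ∈ range (m + 1), c k * t (m - k)) atTop (𝓝 ((∑' k, c k) * L)) := by
  obtain ⟨M, hM⟩ := ht.norm.bddAbove_range
  have hsum_eq (m : ℕ) : ∑ k ∈ range (m + 1), c k * t (m - k) =
      ∑' k, if k ≤ m then c k * t (m - k) else 0 := by
    rw [tsum_eq_sum (s := range (m + 1)) fun k hk => if_neg (by simpa [Nat.lt_succ_iff] using hk)]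
    exact sum_congr rfl fun k hk => (if_pos (Nat.lt_succ_iff.mp (mem_range.mp hk))).symm
  simp_rw [hsum_eq, ← tsum_mul_right]
  refine tendsto_tsum_of_dominated_convergence (bound := fun k => ‖c k‖ * M) (hc.norm.mul_right M)
    (fun k => ?_) (Eventually.of_forall fun m k => ?_)
  · refine ((tendsto_const_nhds.mul ht).comp (tendsto_sub_atTop_nat k)).congr' ?_
    filter_upwards [eventually_ge_atTop k] with m hm
    simp [hm]
  · split_ifs
    · rw [norm_mul]
      exact mul_le_mul_of_nonneg_left (hM ⟨_, rfl⟩) (norm_nonneg _)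
    · rw [norm_zero]
      exact mul_nonneg (norm_nonneg _) ((norm_nonneg _).trans (hM ⟨0, rfl⟩))

theorem mul_le_mul_succ_of_log_convex {p : ℕ → ℝ} (hpos : ∀ n, 0 < p n)
    (hlc : ∀ n, p (n + 1) * p (n + 1) ≤ p n * p (n + 2)) {i j : ℕ} (hij : i ≤ j) :
    p (i + 1) * p j ≤ p i * p (j + 1) := by
  have hratio : Monotone fun n => p (n + 1) / p n := monotone_nat_of_le_succ fun n => by
    rw [div_le_div_iff₀ (hpos n) (hpos (n + 1))]
    linarith [hlc n]
  have := hratio hij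
  rw [div_le_div_iff₀ (hpos i) (hpos j)] at this
  linarith

namespace PowerSeries

theorem coeff_mul_eq_sum_range {R : Type*} [Semiring R] (φ ψ : R⟦X⟧) (m : ℕ) :
    coeff m (φ * ψ) = ∑ k ∈ range (m + 1), coeff k φ * coeff (m - k) ψ := by
  rw [coeff_mul, Nat.sum_antidiagonal_eq_sum_range_succ_mk]

theorem sum_range_neg_coeff_inv_mk_mul {k : Type*} [Field k] {p : ℕ → k} (hp0 : p 0 = 1) (n : ℕ) :
    ∑ i ∈ range (n + 1), -coeff (i + 1) (mk p)⁻¹ * p (n - i) = p (n + 1) := by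
  have h := congrArg (coeff (n + 1)) (PowerSeries.inv_mul_cancel (mk p) (by simp [hp0]))
  rw [coeff_mul_eq_sum_range, sum_range_succ', coeff_one, if_neg n.succ_ne_zero] at h
  simp only [coeff_mk, Nat.add_sub_add_right, coeff_zero_eq_constantCoeff, constantCoeff_inv,
    constantCoeff_mk, hp0, inv_one, one_mul, Nat.sub_zero] at h
  simp only [neg_mul, sum_neg_distrib]
  linear_combination -h

variable {p : ℕ → ℝ}

theorem coeff_succ_inv_mk_nonpos (hp0 : p 0 = 1) (hpos : ∀ n, 0 < p n)
    (hlc : ∀ n, p (n + 1) * p (n + 1) ≤ p n * p (n + 2)) (n : ℕ) :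
    coeff (n + 1) (mk p)⁻¹ ≤ 0 := by
  induction n using Nat.strong_induction_on with
  | _ n ih =>
  have hrec := sum_range_neg_coeff_inv_mk_mul hp0 n
  rw [sum_range_succ, Nat.sub_self, hp0, mul_one] at hrec
  suffices ∑ i ∈ range n, -coeff (i + 1) (mk p)⁻¹ * p (n - i) ≤ p (n + 1) by linarith
  cases n with
  | zero => simp [(hpos 1).le]
  | succ m =>
    -- compare termwise with the recurrence at `m`: `p (j + 1) / p j ≤ p (m + 2) / p (m + 1)`
    refine le_of_mul_le_mul_right ?_ (hpos (m + 1))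
    rw [sum_mul]
    calc ∑ i ∈ range (m + 1), -coeff (i + 1) (mk p)⁻¹ * p (m + 1 - i) * p (m + 1)
        ≤ ∑ i ∈ range (m + 1), -coeff (i + 1) (mk p)⁻¹ * p (m - i) * p (m + 2) := by
          refine sum_le_sum fun i hi => ?_
          have hi : i ≤ m := Nat.lt_succ_iff.mp (mem_range.mp hi)
          rw [mul_assoc, mul_assoc, Nat.sub_add_comm hi]
          exact mul_le_mul_of_nonneg_left (mul_le_mul_succ_of_log_convex hpos hlc (by omega))
            (neg_nonneg.mpr (ih i (by omega)))
      _ = p (m + 2) * p (m + 1) := by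
          rw [← sum_mul, sum_range_neg_coeff_inv_mk_mul hp0 m, mul_comm]

theorem abs_coeff_succ_inv_mk_le (hp0 : p 0 = 1) (hpos : ∀ n, 0 < p n)
    (hlc : ∀ n, p (n + 1) * p (n + 1) ≤ p n * p (n + 2)) (n : ℕ) :
    |coeff (n + 1) (mk p)⁻¹| ≤ p (n + 1) := by
  rw [abs_of_nonpos (coeff_succ_inv_mk_nonpos hp0 hpos hlc n),
    ← sum_range_neg_coeff_inv_mk_mul hp0 n]
  have := single_le_sum (f := fun i => -coeff (i + 1) (mk p)⁻¹ * p (n - i))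
    (fun i _ => mul_nonneg (neg_nonneg.mpr (coeff_succ_inv_mk_nonpos hp0 hpos hlc i)) (hpos _).le)
    (self_mem_range_succ n)
  simpa [hp0] using this

theorem summable_coeff_inv_mk_of_log_convex (hp : Summable p) (hp0 : p 0 = 1)
    (hpos : ∀ n, 0 < p n) (hlc : ∀ n, p (n + 1) * p (n + 1) ≤ p n * p (n + 2)) :
    Summable fun n => coeff n (mk p)⁻¹ :=
  (summable_nat_add_iff 1).mp <|
    ((summable_nat_add_iff 1).mpr hp).of_norm_bounded (abs_coeff_succ_inv_mk_le hp0 hpos hlc)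

end PowerSeries

theorem sum_range_sub_mul_eq_sum_range_mul_sub {R : Type*} [CommSemiring R] (f g : ℕ → R)
    (m : ℕ) : ∑ n ∈ range (m + 1), f (m - n) * g n = ∑ k ∈ range (m + 1), f k * g (m - k) := by
  rw [← sum_range_reflect]
  refine sum_congr rfl fun k hk => ?_
  rw [Nat.add_sub_cancel, Nat.sub_sub_self (Nat.lt_succ_iff.mp (mem_range.mp hk))]

noncomputable def norlundMean (p a : ℕ → ℝ) (m : ℕ) : ℝ :=
  (∑ n ∈ range (m + 1), p (m - n) * a n) / ∑ j ∈ range (m + 1), p j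

section Norlund

variable {p a : ℕ → ℝ} {σ : ℝ}

theorem tendsto_norlundMean_of_tendsto (hp : Summable p) (hZ : ∑' n, p n ≠ 0)
    (ha : Tendsto a atTop (𝓝 σ)) : Tendsto (norlundMean p a) atTop (𝓝 σ) := by
  have hnum := tendsto_sum_range_mul_sub_of_summable hp ha
  have hden : Tendsto (fun m => ∑ j ∈ range (m + 1), p j) atTop (𝓝 (∑' n, p n)) :=
    hp.hasSum.tendsto_sum_nat.comp (tendsto_add_atTop_nat 1)
  rw [← mul_div_cancel_left₀ σ hZ]
  refine (hnum.div hden hZ).congr fun m => ?_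
  rw [norlundMean, sum_range_sub_mul_eq_sum_range_mul_sub, Pi.div_apply]

theorem tendsto_of_tendsto_norlundMean (hp : Summable p) (hp0 : p 0 ≠ 0) (hZ : ∑' n, p n ≠ 0)
    (hq : Summable fun n => coeff n (mk p)⁻¹) (h : Tendsto (norlundMean p a) atTop (𝓝 σ)) :
    Tendsto a atTop (𝓝 ((∑' n, coeff n (mk p)⁻¹) * (σ * ∑' n, p n))) := by
  have hden : Tendsto (fun m => ∑ j ∈ range (m + 1), p j) atTop (𝓝 (∑' n, p n)) :=
    hp.hasSum.tendsto_sum_nat.comp (tendsto_add_atTop_nat 1)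
  have hnum : Tendsto (fun m => coeff m (mk p * mk a)) atTop (𝓝 (σ * ∑' n, p n)) := by
    refine (h.mul hden).congr' ?_
    filter_upwards [hden.eventually_ne hZ] with m hm
    rw [norlundMean, div_mul_cancel₀ _ hm, coeff_mul_eq_sum_range,
      sum_range_sub_mul_eq_sum_range_mul_sub]
    simp only [coeff_mk]
  refine (tendsto_sum_range_mul_sub_of_summable hq hnum).congr fun n => ?_
  rw [← coeff_mul_eq_sum_range, ← mul_assoc, PowerSeries.inv_mul_cancel _ (by simpa using hp0),
    one_mul, coeff_mk]

theorem tendsto_iff_tendsto_norlundMean (hp : Summable p) (hp0 : p 0 ≠ 0) (hZ : ∑' n, p n ≠ 0)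
    (hq : Summable fun n => coeff n (mk p)⁻¹) :
    Tendsto a atTop (𝓝 σ) ↔ Tendsto (norlundMean p a) atTop (𝓝 σ) := by
  refine ⟨tendsto_norlundMean_of_tendsto hp hZ, fun h => ?_⟩
  have ha := tendsto_of_tendsto_norlundMean hp hp0 hZ hq h
  rwa [tendsto_nhds_unique (tendsto_norlundMean_of_tendsto hp hZ ha) h] at ha

end Norlund

theorem zeta_weights_norlund_trivial (s : ℝ) (hs : 1 < s) (a : ℕ → ℝ) (σ : ℝ) :
    Tendsto a atTop (nhds σ) ↔
      Tendsto (fun m => (∑ n ∈ Finset.range (m + 1),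
          ((m - n : ℕ) + 1 : ℝ) ^ (-s) * a n) /
        (∑ j ∈ Finset.range (m + 1), ((j : ℝ) + 1) ^ (-s))) atTop (nhds σ) := by
  set p : ℕ → ℝ := fun n => ((n : ℝ) + 1) ^ (-s)
  have hpos (n : ℕ) : 0 < p n := by positivity
  have hp0 : p 0 = 1 := by simp [p]
  have hp : Summable p := by
    simpa [p] using (summable_nat_add_iff 1).mpr (Real.summable_nat_rpow.mpr (by linarith))
  have hlc (n : ℕ) : p (n + 1) * p (n + 1) ≤ p n * p (n + 2) := by
    simp only [p, Nat.cast_add, Nat.cast_one, Nat.cast_ofNat]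
    rw [← Real.mul_rpow (by positivity) (by positivity),
      ← Real.mul_rpow (by positivity) (by positivity)]
    exact Real.rpow_le_rpow_of_nonpos (by positivity) (by nlinarith) (by linarith)
  have hZ : ∑' n, p n ≠ 0 := (hp.tsum_pos (fun n => (hpos n).le) 0 (hpos 0)).ne'
  have hq := summable_coeff_inv_mk_of_log_convex hp hp0 hpos hlc
  have key := tendsto_iff_tendsto_norlundMean (a := a) (σ := σ) hp (by simp [hp0]) hZ hq
  unfold norlundMean at key
  exact key
end

section
/- (Eneström–Kakeya) If p_0 > p_1 > ⋯ > p_N > 0 are real numbers, then the polynomial P(x) = p_0 + p_1 x + ⋯ + p_N x^N has no complex zeros in the closed unit disc {z : |z| ≤ 1}. -/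
open Finset

/-!
If `P(z) = 0`, then `0 = (z - 1) P(z)` rewrites `p₀` as `∑ (pₙ - pₙ₊₁) z^(n+1)` (with `p_{N+1} = 0`),
a combination of points of the closed unit disc with positive weights summing to `p₀`.
Comparing real parts forces every `z^(n+1)` to be `1`, so `z = 1`; but `P(1) > 0`.
-/

namespace Complex

theorem eq_one_of_norm_le_one_of_re_eq_one {u : ℂ} (hu : ‖u‖ ≤ 1) (hre : u.re = 1) : u = 1 := by
  have him := sq_norm_sub_sq_re u
  rw [hre] at him
  exact ext hre (by rw [one_im]; nlinarith [norm_nonneg u, sq_nonneg u.im])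

theorem eq_one_of_sum_ofReal_mul_eq_sum {ι : Type*} {s : Finset ι} {w : ι → ℝ} {u : ι → ℂ}
    (hw : ∀ i ∈ s, 0 < w i) (hu : ∀ i ∈ s, ‖u i‖ ≤ 1)
    (h : ∑ i ∈ s, (w i : ℂ) * u i = ∑ i ∈ s, w i) : ∀ i ∈ s, u i = 1 := by
  have hle : ∀ i ∈ s, w i * (u i).re ≤ w i := fun i hi =>
    mul_le_of_le_one_right (hw i hi).le ((re_le_norm _).trans (hu i hi))
  have hre : ∑ i ∈ s, w i * (u i).re = ∑ i ∈ s, w i := by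
    simpa [re_sum] using congrArg re h
  intro i hi
  refine eq_one_of_norm_le_one_of_re_eq_one (hu i hi) ?_
  exact (mul_eq_left₀ (hw i hi).ne').1 ((sum_eq_sum_iff_of_le hle).1 hre i hi)

end Complex

theorem sub_one_mul_sum_mul_pow {R : Type*} [CommRing R] (q : ℕ → R) (z : R) (M : ℕ) :
    (z - 1) * ∑ n ∈ range M, q n * z ^ n + q 0 =
      ∑ n ∈ range M, (q n - q (n + 1)) * z ^ (n + 1) + q M * z ^ M := by
  induction M with
  | zero => simp
  | succ M ih =>
    rw [sum_range_succ, sum_range_succ, mul_add]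
    linear_combination ih

theorem sum_mul_pow_ne_zero_of_succ_lt (N : ℕ) (q : ℕ → ℝ) (hq : ∀ n ≤ N, q (n + 1) < q n)
    (hqN : q (N + 1) = 0) {z : ℂ} (hz : ‖z‖ ≤ 1) :
    ∑ n ∈ range (N + 1), (q n : ℂ) * z ^ n ≠ 0 := by
  intro hP
  have hw : ∀ n ∈ range (N + 1), 0 < q n - q (n + 1) := fun n hn =>
    sub_pos.2 (hq n (mem_range_succ_iff.1 hn))
  have hid : ∑ n ∈ range (N + 1), ((q n - q (n + 1) : ℝ) : ℂ) * z ^ (n + 1) =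
      ∑ n ∈ range (N + 1), (q n - q (n + 1)) := by
    have := sub_one_mul_sum_mul_pow (fun n => (q n : ℂ)) z (N + 1)
    rw [hP, hqN] at this
    rw [sum_range_sub', hqN]
    push_cast at this ⊢
    linear_combination -this
  have hz1 : z = 1 := by
    simpa using Complex.eq_one_of_sum_ofReal_mul_eq_sum hw
      (fun n _ => by rw [norm_pow]; exact pow_le_one₀ (norm_nonneg z) hz) hid 0 (by simp)
  have hanti : StrictAntiOn q (Set.Iic (N + 1)) :=
    strictAntiOn_Iic_of_succ_lt fun m hm => hq m (Nat.lt_succ_iff.1 hm)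
  have hpos : 0 < ∑ n ∈ range (N + 1), q n := sum_pos (fun n hn => by
    have hn := mem_range.1 hn
    exact hqN ▸ hanti (Set.mem_Iic.2 hn.le) Set.self_mem_Iic hn) nonempty_range_add_one
  subst hz1
  simp only [one_pow, mul_one] at hP
  exact hpos.ne' (by exact_mod_cast hP)

/-- Eneström–Kakeya theorem. -/
theorem enestrom_kakeya (N : ℕ) (p : ℕ → ℝ)
    (hdec : ∀ i < N, p (i + 1) < p i) (hpos : 0 < p N) :
    ∀ z : ℂ, ‖z‖ ≤ 1 →
      (∑ n ∈ Finset.range (N + 1), (p n : ℂ) * z ^ n) ≠ 0 := by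
  intro z hz
  -- Extending `p` by `0` beyond `N` merges `hdec` and `hpos` into a single strict decrease.
  have htrunc : ∑ n ∈ range (N + 1), (p n : ℂ) * z ^ n =
      ∑ n ∈ range (N + 1), ((if n ≤ N then p n else 0 : ℝ) : ℂ) * z ^ n :=
    sum_congr rfl fun n hn => by rw [if_pos (mem_range_succ_iff.1 hn)]
  rw [htrunc]
  refine sum_mul_pow_ne_zero_of_succ_lt N _ (fun n hn => ?_) (by simp) hz
  rcases hn.lt_or_eq with hn | rfl
  · simpa [hn.le, Nat.succ_le_of_lt hn] using hdec n hn
  · simpa using hpos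
end

section
/- Let p_0 > p_1 > ⋯ > p_N > 0 and p_n = 0 for n > N. Then the Nörlund method (N,p) is trivial: a sequence s converges to σ in the ordinary sense if and only if the Nörlund means t_m = (∑_{n=0}^m p_{m−n} s_n)/(∑_{k≤min(m,N)} p_k) converge to σ. -/
/-!
Let `c` be the coefficients of `(∑ pₙ Xⁿ)⁻¹`. The numerators `q` of the Nörlund means are the
coefficients of `(∑ pₙ Xⁿ) * (∑ sₙ Xⁿ)`, so `s` is the Cauchy product `c ⋆ q`. Convolving a
convergent sequence with an absolutely summable one is continuous (dominated convergence), so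
`s → σ ⇒ q → P σ` with `P = ∑ pₙ`, and, once `∑ |cₙ| < ∞`, `q → P σ ⇒ s → (∑ cₙ) P σ = σ`.

Instead of Eneström–Kakeya, absolute summability of `c` comes from its partial sums `b`: comparing
coefficients in `(∑ pₙ Xⁿ) * ∑ bₙ Xⁿ = (1 - X)⁻¹` gives
`p₀ b (n + 1) = ∑_{j ≤ N} (pⱼ - pⱼ₊₁) b (n - j)` for `n ≥ N`, a convex recurrence with weights
`≥ θ > 0`. Such a recurrence shrinks the oscillation of `N + 1` consecutive terms by the factor
`1 - θ²` every `N + 1` steps, hence `∑ |b (n + 1) - b n| < ∞`.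
-/

open Filter Finset PowerSeries Topology

namespace PowerSeries

variable {R : Type*} [NormedRing R] [CompleteSpace R]

theorem tendsto_coeff_mul {φ ψ : R⟦X⟧} {L : R} (hφ : Summable fun n => ‖coeff n φ‖)
    (hψ : Tendsto (fun n => coeff n ψ) atTop (𝓝 L)) :
    Tendsto (fun n => coeff n (φ * ψ)) atTop (𝓝 ((∑' k, coeff k φ) * L)) := by
  obtain ⟨Q, hQ⟩ : ∃ Q, ∀ n, ‖coeff n ψ‖ ≤ Q := by
    obtain ⟨Q, hQ⟩ := (Metric.isBounded_range_of_tendsto _ hψ).exists_norm_le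
    exact ⟨Q, fun n => hQ _ (Set.mem_range_self n)⟩
  let F : ℕ → ℕ → R := fun n k => if k ≤ n then coeff k φ * coeff (n - k) ψ else 0
  have hF : ∀ n, ∑' k, F n k = coeff n (φ * ψ) := by
    intro n
    rw [tsum_eq_sum (s := range (n + 1)) (fun k hk => if_neg (by simpa using hk)), coeff_mul,
      Nat.sum_antidiagonal_eq_sum_range_succ_mk]
    exact sum_congr rfl fun k hk => if_pos (mem_range_succ_iff.1 hk)
  rw [← hφ.of_norm.tsum_mul_right]
  refine (tendsto_tsum_of_dominated_convergence (bound := fun k => ‖coeff k φ‖ * Q)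
    (hφ.mul_right Q) (fun k => ?_) (.of_forall fun n k => ?_)).congr hF
  · refine ((hψ.comp (tendsto_sub_atTop_nat k)).const_mul (coeff k φ)).congr' ?_
    filter_upwards [eventually_ge_atTop k] with n hn
    simp [F, hn]
  · by_cases hk : k ≤ n
    · simp only [F, if_pos hk]
      exact (norm_mul_le _ _).trans (mul_le_mul_of_nonneg_left (hQ _) (norm_nonneg _))
    · simp only [F, if_neg hk, norm_zero]
      exact mul_nonneg (norm_nonneg _) ((norm_nonneg _).trans (hQ 0))

theorem tsum_coeff_mul {φ ψ : R⟦X⟧} (hφ : Summable fun n => ‖coeff n φ‖)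
    (hψ : Summable fun n => ‖coeff n ψ‖) :
    ∑' n, coeff n (φ * ψ) = (∑' n, coeff n φ) * ∑' n, coeff n ψ := by
  simp only [coeff_mul]
  exact (tsum_mul_tsum_eq_tsum_sum_antidiagonal_of_summable_norm hφ hψ).symm

end PowerSeries

theorem weighted_sum_le_sub_of_le {ι : Type*} {s : Finset ι} {w x : ι → ℝ} {M e : ℝ}
    (hw : ∀ i ∈ s, 0 ≤ w i) (hw1 : ∑ i ∈ s, w i = 1) (hx : ∀ i ∈ s, x i ≤ M) {i₀ : ι}
    (hi₀ : i₀ ∈ s) (he : x i₀ ≤ M - e) : ∑ i ∈ s, w i * x i ≤ M - w i₀ * e := by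
  have hsingle : w i₀ * (M - x i₀) ≤ ∑ i ∈ s, w i * (M - x i) :=
    single_le_sum (f := fun i => w i * (M - x i))
      (fun i hi => mul_nonneg (hw i hi) (sub_nonneg.2 (hx i hi))) hi₀
  have hsum : ∑ i ∈ s, w i * (M - x i) = M - ∑ i ∈ s, w i * x i := by
    simp only [mul_sub, sum_sub_distrib, ← sum_mul, hw1, one_mul]
  nlinarith [hw i₀ hi₀]

theorem summable_of_apply_add_le_mul {f : ℕ → ℝ} {K : ℕ} {ρ : ℝ} (hK : 0 < K) (hf : 0 ≤ f)
    (hρ₀ : 0 ≤ ρ) (hρ₁ : ρ < 1) (h : ∀ k, f (k + K) ≤ ρ * f k) : Summable f := by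
  have hgeom : ∀ t r, f (t * K + r) ≤ ρ ^ t * f r := by
    intro t r
    induction t with
    | zero => simp
    | succ t ih =>
      calc f ((t + 1) * K + r) = f (t * K + r + K) := by ring_nf
        _ ≤ ρ * f (t * K + r) := h _
        _ ≤ ρ * (ρ ^ t * f r) := mul_le_mul_of_nonneg_left ih hρ₀
        _ = ρ ^ (t + 1) * f r := by ring
  have : NeZero K := ⟨hK.ne'⟩
  rw [← (Nat.divModEquiv K).symm.summable_iff]
  exact Summable.of_nonneg_of_le (fun _ => hf _) (fun x => hgeom x.1 x.2)
    ((summable_geometric_of_lt_one hρ₀ hρ₁).mul_of_nonneg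
      (Summable.of_finite (f := fun r : Fin K => f r)) (fun _ => pow_nonneg hρ₀ _) (fun _ => hf _))

def windowMax (N : ℕ) (b : ℕ → ℝ) (k : ℕ) : ℝ :=
  (range (N + 1)).sup' nonempty_range_add_one fun i => b (k + i)

/-- The oscillation `max - min` of `b k, …, b (k + N)`. -/
def windowOsc (N : ℕ) (b : ℕ → ℝ) (k : ℕ) : ℝ :=
  windowMax N b k + windowMax N (-b) k

def IsConvexRecurrence (N : ℕ) (w b : ℕ → ℝ) : Prop :=
  ∀ n ≥ N, b (n + 1) = ∑ j ∈ range (N + 1), w j * b (n - j)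

section ConvexRecurrence

variable {N : ℕ} {w b : ℕ → ℝ} {k : ℕ}

theorem le_windowMax {i : ℕ} (hi : i ≤ N) : b (k + i) ≤ windowMax N b k :=
  le_sup' (fun i => b (k + i)) (mem_range_succ_iff.2 hi)

theorem windowMax_le {M : ℝ} (h : ∀ i ≤ N, b (k + i) ≤ M) : windowMax N b k ≤ M :=
  sup'_le _ _ fun i hi => h i (mem_range_succ_iff.1 hi)

theorem exists_eq_windowMax (N : ℕ) (b : ℕ → ℝ) (k : ℕ) :
    ∃ i ≤ N, b (k + i) = windowMax N b k := by
  obtain ⟨i, hi, h⟩ := exists_mem_eq_sup' nonempty_range_add_one fun i => b (k + i)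
  exact ⟨i, mem_range_succ_iff.1 hi, h.symm⟩

theorem windowOsc_nonneg : 0 ≤ windowOsc N b k := by
  have h₁ : b (k + 0) ≤ windowMax N b k := le_windowMax N.zero_le
  have h₂ : (-b) (k + 0) ≤ windowMax N (-b) k := le_windowMax N.zero_le
  simp only [add_zero, Pi.neg_apply] at h₁ h₂
  unfold windowOsc; linarith

theorem windowOsc_neg : windowOsc N (-b) k = windowOsc N b k := by
  rw [windowOsc, windowOsc, neg_neg, add_comm]

theorem IsConvexRecurrence.neg (hb : IsConvexRecurrence N w b) :
    IsConvexRecurrence N w (-b) := by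
  intro n hn
  simp only [Pi.neg_apply, hb n hn, mul_neg, sum_neg_distrib]

theorem IsConvexRecurrence.le_sub_mul (hw : ∀ j ≤ N, 0 ≤ w j)
    (hw1 : ∑ j ∈ range (N + 1), w j = 1) (hb : IsConvexRecurrence N w b) {M e : ℝ}
    (hM : ∀ i ≤ N, b (k + i) ≤ M) {i₀ : ℕ}
    (hi₀ : i₀ ≤ N) (he : b (k + i₀) ≤ M - e) : b (k + N + 1) ≤ M - w (N - i₀) * e := by
  rw [hb _ (Nat.le_add_left N k)]
  refine weighted_sum_le_sub_of_le (fun j hj => hw j (mem_range_succ_iff.1 hj)) hw1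
    (fun j hj => ?_) (mem_range_succ_iff.2 (N.sub_le i₀)) ?_
  · rw [Nat.add_sub_assoc (mem_range_succ_iff.1 hj)]
    exact hM _ (N.sub_le j)
  · rwa [Nat.add_sub_assoc (N.sub_le i₀), Nat.sub_sub_self hi₀]

theorem IsConvexRecurrence.windowMax_antitone (hw : ∀ j ≤ N, 0 ≤ w j)
    (hw1 : ∑ j ∈ range (N + 1), w j = 1) (hb : IsConvexRecurrence N w b) :
    Antitone (windowMax N b) := by
  refine antitone_nat_of_succ_le fun n => windowMax_le fun i hi => ?_
  rcases hi.lt_or_eq with hi | hi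
  · rw [add_assoc, add_comm 1]
    exact le_windowMax hi
  · rw [hi]
    have := hb.le_sub_mul hw hw1 (k := n) (e := 0) (fun i hi => le_windowMax hi) (Nat.zero_le N)
      (by simpa using le_windowMax (k := n) (Nat.zero_le N))
    rwa [mul_zero, sub_zero, add_right_comm] at this

theorem IsConvexRecurrence.apply_add_le_windowMax (hw : ∀ j ≤ N, 0 ≤ w j)
    (hw1 : ∑ j ∈ range (N + 1), w j = 1) (hb : IsConvexRecurrence N w b) (i : ℕ) :
    b (k + i) ≤ windowMax N b k :=
  (le_windowMax (k := k + i) N.zero_le).trans (hb.windowMax_antitone hw hw1 (k.le_add_right i))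

theorem IsConvexRecurrence.windowMax_add_le (hw : ∀ j ≤ N, 0 ≤ w j)
    (hw1 : ∑ j ∈ range (N + 1), w j = 1) (hb : IsConvexRecurrence N w b) {θ : ℝ}
    (hθ : ∀ j ≤ N, θ ≤ w j) (hθ₀ : 0 ≤ θ) (hθ₁ : θ ≤ 1) (k : ℕ) :
    windowMax N b (k + N + 1) ≤ windowMax N b k - θ ^ 2 * windowOsc N b k := by
  set M := windowMax N b k
  set D := windowOsc N b k
  have hD : 0 ≤ D := windowOsc_nonneg
  have hM : ∀ i, b (k + i) ≤ M := hb.apply_add_le_windowMax hw hw1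
  obtain ⟨i₀, hi₀, hmin⟩ := exists_eq_windowMax N (-b) k
  have hnext : b (k + N + 1) ≤ M - θ * D := by
    have := hb.le_sub_mul hw hw1 (fun i _ => hM i) hi₀ (e := D)
      (by simp only [D, windowOsc, ← hmin, Pi.neg_apply]; linarith)
    exact this.trans (by nlinarith [hθ (N - i₀) (N.sub_le i₀)])
  have hθD : θ ^ 2 * D ≤ θ * D :=
    mul_le_mul_of_nonneg_right (pow_le_of_le_one hθ₀ hθ₁ two_ne_zero) hD
  -- `b (k + N + 1)` gives weight `≥ θ` to the window minimum, and every later term of the next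
  -- window gives weight `≥ θ` to `b (k + N + 1)`.
  refine windowMax_le fun i hi => ?_
  rcases Nat.eq_zero_or_pos i with rfl | hi0
  · linarith
  · have := hb.le_sub_mul hw hw1 (k := k + i) (M := M)
      (fun j _ => by rw [add_assoc]; exact hM _) (i₀ := N + 1 - i) (by omega) (e := θ * D)
      (by rw [show k + i + (N + 1 - i) = k + N + 1 by omega]; exact hnext)
    rw [show k + N + 1 + i = k + i + N + 1 by omega]
    have hw' := mul_le_mul_of_nonneg_right (hθ (N - (N + 1 - i)) (by omega)) (mul_nonneg hθ₀ hD)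
    linarith [show θ * (θ * D) = θ ^ 2 * D by ring]

theorem IsConvexRecurrence.windowOsc_add_le (hw : ∀ j ≤ N, 0 ≤ w j)
    (hw1 : ∑ j ∈ range (N + 1), w j = 1) (hb : IsConvexRecurrence N w b) {θ : ℝ}
    (hθ : ∀ j ≤ N, θ ≤ w j) (hθ₀ : 0 ≤ θ) (hθ₁ : θ ≤ 1) (k : ℕ) :
    windowOsc N b (k + (N + 1)) ≤ (1 - θ ^ 2) * windowOsc N b k := by
  have hmax := hb.windowMax_add_le hw hw1 hθ hθ₀ hθ₁ k
  have hmin := hb.neg.windowMax_add_le hw hw1 hθ hθ₀ hθ₁ k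
  have hD : 0 ≤ windowOsc N b k := windowOsc_nonneg
  rw [windowOsc_neg] at hmin
  rw [← add_assoc, windowOsc]
  have : windowOsc N b k = windowMax N b k + windowMax N (-b) k := rfl
  nlinarith [mul_nonneg (sq_nonneg θ) hD]

theorem IsConvexRecurrence.abs_sub_le_windowOsc (hw : ∀ j ≤ N, 0 ≤ w j)
    (hw1 : ∑ j ∈ range (N + 1), w j = 1) (hb : IsConvexRecurrence N w b) (k : ℕ) :
    |b (k + 1) - b k| ≤ windowOsc N b k := by
  have h₁ := hb.apply_add_le_windowMax hw hw1 (k := k) 1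
  have h₂ := hb.neg.apply_add_le_windowMax hw hw1 (k := k) 1
  have h₃ := hb.apply_add_le_windowMax hw hw1 (k := k) 0
  have h₄ := hb.neg.apply_add_le_windowMax hw hw1 (k := k) 0
  simp only [add_zero, Pi.neg_apply] at h₂ h₃ h₄
  rw [abs_sub_le_iff, windowOsc]
  constructor <;> linarith

theorem IsConvexRecurrence.summable_abs_sub (hw : ∀ j ≤ N, 0 < w j)
    (hw1 : ∑ j ∈ range (N + 1), w j = 1) (hb : IsConvexRecurrence N w b) :
    Summable fun n => |b (n + 1) - b n| := by
  set θ := (range (N + 1)).inf' nonempty_range_add_one w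
  have hθ : ∀ j ≤ N, θ ≤ w j := fun j hj => inf'_le _ (mem_range_succ_iff.2 hj)
  have hθ₀ : 0 < θ := (lt_inf'_iff _).2 fun j hj => hw j (mem_range_succ_iff.1 hj)
  have hw₀ : ∀ j ≤ N, 0 ≤ w j := fun j hj => (hw j hj).le
  have hθ₁ : θ ≤ 1 := (hθ 0 N.zero_le).trans <| hw1 ▸
    single_le_sum (fun j hj => hw₀ j (mem_range_succ_iff.1 hj)) (mem_range_succ_iff.2 N.zero_le)
  refine Summable.of_nonneg_of_le (fun _ => abs_nonneg _) (hb.abs_sub_le_windowOsc hw₀ hw1)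
    (summable_of_apply_add_le_mul N.succ_pos (fun _ => windowOsc_nonneg) (ρ := 1 - θ ^ 2)
      (by nlinarith) (by nlinarith) (hb.windowOsc_add_le hw₀ hw1 hθ hθ₀.le hθ₁))

end ConvexRecurrence

section FinitelySupported

noncomputable def invPartialSum (p : ℕ → ℝ) (k : ℕ) : ℝ :=
  ∑ i ∈ range (k + 1), coeff i (mk p)⁻¹

variable {N : ℕ} {p : ℕ → ℝ}

theorem sum_range_sub_succ_of_eq_zero (hzero : ∀ n > N, p n = 0) :
    ∑ j ∈ range (N + 1), (p j - p (j + 1)) = p 0 := by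
  rw [sum_range_sub', hzero _ N.lt_succ_self, sub_zero]

theorem apply_zero_pos (hgap : ∀ j ≤ N, p (j + 1) < p j) (hzero : ∀ n > N, p n = 0) :
    0 < p 0 :=
  sum_range_sub_succ_of_eq_zero hzero ▸
    sum_pos (fun j hj => sub_pos.2 (hgap j (mem_range_succ_iff.1 hj))) nonempty_range_add_one

theorem sum_range_mul_invPartialSum (hp0 : p 0 ≠ 0) (k : ℕ) :
    ∑ i ∈ range (k + 1), p i * invPartialSum p (k - i) = 1 := by
  have hmk : mk (invPartialSum p) = (mk p)⁻¹ * mk fun _ => 1 := by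
    ext n
    simp [invPartialSum, coeff_mul, Nat.sum_antidiagonal_eq_sum_range_succ_mk]
  have h := congrArg (coeff k) (show mk p * mk (invPartialSum p) = mk fun _ => 1 by
    rw [hmk, ← mul_assoc, PowerSeries.mul_inv_cancel _ (by simpa using hp0), one_mul])
  simpa [coeff_mul, Nat.sum_antidiagonal_eq_sum_range_succ_mk] using h

theorem isConvexRecurrence_invPartialSum (hp0 : p 0 ≠ 0) (hzero : ∀ n > N, p n = 0) :
    IsConvexRecurrence N (fun j => (p j - p (j + 1)) / p 0) (invPartialSum p) := by
  intro n hn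
  have htrunc : ∀ m ≥ N, ∑ i ∈ range (N + 1), p i * invPartialSum p (m - i) = 1 := fun m hm =>
    (eventually_constant_sum (fun i hi => by rw [hzero i hi, zero_mul]) (by omega)).symm.trans
      (sum_range_mul_invPartialSum hp0 m)
  have hsucc := htrunc (n + 1) (by omega)
  rw [sum_range_succ'] at hsucc
  simp only [Nat.add_sub_add_right, Nat.sub_zero] at hsucc
  have hshift : ∑ j ∈ range (N + 1), p (j + 1) * invPartialSum p (n - j) =
      ∑ j ∈ range N, p (j + 1) * invPartialSum p (n - j) := by
    rw [sum_range_succ, hzero (N + 1) N.lt_succ_self, zero_mul, add_zero]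
  have hrec : p 0 * invPartialSum p (n + 1) =
      ∑ j ∈ range (N + 1), (p j - p (j + 1)) * invPartialSum p (n - j) := by
    simp only [sub_mul, sum_sub_distrib]
    linarith [htrunc n hn]
  simp only [div_mul_eq_mul_div, ← sum_div, ← hrec]
  field_simp

theorem summable_norm_coeff_inv_mk (hgap : ∀ j ≤ N, p (j + 1) < p j)
    (hzero : ∀ n > N, p n = 0) :
    Summable fun n => ‖coeff n (mk p)⁻¹‖ := by
  have hp0 := apply_zero_pos hgap hzero
  have hsum := (isConvexRecurrence_invPartialSum hp0.ne' hzero).summable_abs_sub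
    (fun j hj => div_pos (sub_pos.2 (hgap j hj)) hp0)
    (by rw [← sum_div, sum_range_sub_succ_of_eq_zero hzero, div_self hp0.ne'])
  rw [← summable_nat_add_iff 1]
  simpa [invPartialSum, sum_range_succ _ (_ + 1)] using hsum

end FinitelySupported

theorem finitely_supported_decreasing_norlund_trivial (N : ℕ) (p : ℕ → ℝ)
    (hdec : ∀ i < N, p (i + 1) < p i) (hpos : 0 < p N)
    (hzero : ∀ n > N, p n = 0) (s : ℕ → ℝ) (σ : ℝ) :
    Tendsto s atTop (nhds σ) ↔
      Tendsto (fun m => (∑ n ∈ Finset.range (m + 1), p (m - n) * s n) /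
        (∑ k ∈ Finset.range (min m N + 1), p k)) atTop (nhds σ) := by
  have hgap : ∀ j ≤ N, p (j + 1) < p j := fun j hj => hj.lt_or_eq.elim (hdec j) fun hjN => by
    rwa [hjN, hzero _ N.lt_succ_self]
  have hp0 := apply_zero_pos hgap hzero
  set P := ∑ k ∈ range (N + 1), p k
  have hp : Summable fun n => ‖coeff n (mk p)‖ :=
    summable_of_ne_finset_zero (s := range (N + 1)) fun n hn => by
      simp [hzero n (by simpa using hn)]
  have htsum : ∑' n, coeff n (mk p) = P := by
    simp only [coeff_mk]
    exact tsum_eq_sum fun n hn => hzero n (by simpa using hn)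
  have hc := summable_norm_coeff_inv_mk hgap hzero
  have hinv : (∑' n, coeff n (mk p)⁻¹) * P = 1 := by
    rw [← htsum, ← tsum_coeff_mul hc hp,
      PowerSeries.inv_mul_cancel _ (by simpa using hp0.ne')]
    simp [coeff_one]
  have hP : P ≠ 0 := right_ne_zero_of_mul_eq_one hinv
  have hmean : (fun m => (∑ n ∈ range (m + 1), p (m - n) * s n) / ∑ k ∈ range (min m N + 1), p k)
      =ᶠ[atTop] fun m => coeff m (mk p * mk s) / P := by
    filter_upwards [eventually_ge_atTop N] with m hm
    rw [min_eq_right hm, mul_comm, coeff_mul, Nat.sum_antidiagonal_eq_sum_range_succ_mk]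
    simp [P, mul_comm]
  rw [tendsto_congr' hmean]
  constructor
  · intro hs
    have := (tendsto_coeff_mul hp (ψ := mk s) (by simpa using hs)).div_const P
    rwa [htsum, mul_div_cancel_left₀ _ hP] at this
  · intro ht
    have hq : Tendsto (fun m => coeff m (mk p * mk s)) atTop (𝓝 (P * σ)) :=
      (ht.const_mul P).congr fun m => mul_div_cancel₀ _ hP
    have := tendsto_coeff_mul hc hq
    rw [← mul_assoc, PowerSeries.inv_mul_cancel _ (by simpa using hp0.ne'), one_mul, ← mul_assoc,
      hinv, one_mul] at this
    simpa only [coeff_mk] using this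
end
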